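/- arXiv:2509.24137 — 4 statements merged into one kernel-verified Lean document; each statement's English description precedes it below -/
import Mathlib

section
/- Under the standing hypotheses (conformal free-boundary Y-cone data), define h(z) = Σ_{j=1}^{3} u_{j,zz}(z) · u_{j,zz}(z), where v·w denotes the complex-bilinear dot product Σ_k v_k w_k on ℂ³. Then the imaginary part of z⁴ h(z) vanishes at every point z ∈ γ ∪ σ. -/
noncomputable section

/-- The closed half-disk `D̂ = {z : |z| ≤ 1, Re z ≥ 0}`. -/
def Dhat : Set ℂ := {z | ‖z‖ ≤ 1 ∧ 0 ≤ z.re}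

/-- The junction segment `γ = {Re z = 0, |Im z| ≤ 1}`. -/
def gammaJ : Set ℂ := {z | z.re = 0 ∧ |z.im| ≤ 1}

/-- The circular arc `σ = {|z| = 1, Re z ≥ 0}`. -/
def sigmaArc : Set ℂ := {z | ‖z‖ = 1 ∧ 0 ≤ z.re}

/-- The closed unit disk. -/
def Dbar : Set ℂ := {z | ‖z‖ ≤ 1}

/-- x-partial derivative of a map `ℂ → ℝ³`. -/
def vX (u : ℂ → Fin 3 → ℝ) (z : ℂ) : Fin 3 → ℝ :=
  fun k => fderiv ℝ (fun w => u w k) z 1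

/-- y-partial derivative of a map `ℂ → ℝ³`. -/
def vY (u : ℂ → Fin 3 → ℝ) (z : ℂ) : Fin 3 → ℝ :=
  fun k => fderiv ℝ (fun w => u w k) z Complex.I

/-- Laplacian of a real-valued function on `ℂ ≃ ℝ²`. -/
def lap (f : ℂ → ℝ) (z : ℂ) : ℝ :=
  fderiv ℝ (fun w => fderiv ℝ f w 1) z 1 +
    fderiv ℝ (fun w => fderiv ℝ f w Complex.I) z Complex.I

/-- Wirtinger derivative `∂_z = (1/2)(∂_x - i ∂_y)` of a complex-valued function. -/
def dzC (f : ℂ → ℂ) (z : ℂ) : ℂ :=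
  (1/2) * (fderiv ℝ f z 1 - Complex.I * fderiv ℝ f z Complex.I)

/-- `u_{zz} = ∂_z ∂_z u ∈ ℂ³`, componentwise. -/
def uzz (u : ℂ → Fin 3 → ℝ) (z : ℂ) : Fin 3 → ℂ :=
  fun k => dzC (fun w => dzC (fun w' => ((u w' k : ℝ) : ℂ)) w) z

/-- `h(z) = Σ_j u_{j,zz} · u_{j,zz}` (complex-bilinear dot product). -/
def hfun (u : Fin 3 → ℂ → Fin 3 → ℝ) (z : ℂ) : ℂ :=
  ∑ j : Fin 3, ∑ k : Fin 3, (uzz (u j) z k) ^ 2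

/-- Standing hypotheses: conformal free-boundary Y-cone data. -/
def StandingHyp (u : Fin 3 → ℂ → Fin 3 → ℝ) (U : Set ℂ) : Prop :=
  IsOpen U ∧ Dhat ⊆ U ∧
  (∀ j k, ContDiffOn ℝ (⊤ : ℕ∞) (fun z => u j z k) U) ∧
  (∀ j k, ∀ z ∈ U, lap (fun w => u j w k) z = 0) ∧
  (∀ j, ∀ z ∈ Dhat,
      (∑ k : Fin 3, vX (u j) z k * vY (u j) z k) = 0 ∧
      (∑ k : Fin 3, (vX (u j) z k) ^ 2) = (∑ k : Fin 3, (vY (u j) z k) ^ 2) ∧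
      vX (u j) z ≠ 0) ∧
  (∀ z ∈ gammaJ, u 0 z = u 1 z ∧ u 1 z = u 2 z) ∧
  (∀ z ∈ gammaJ, ∀ k, vX (u 0) z k + vX (u 1) z k + vX (u 2) z k = 0) ∧
  (∀ j, ∀ z ∈ sigmaArc,
      (∑ k : Fin 3, (u j z k) ^ 2) = 1 ∧
      ∃ c : ℝ, ∀ k, z.re * vX (u j) z k + z.im * vY (u j) z k = c * u j z k)

/-- The index form of the free-boundary flat Y-cone. -/
def Qform (f : Fin 3 → ℂ → ℝ) : ℝ :=
  ∑ j : Fin 3,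
    ((∫ z in Dhat, ((fderiv ℝ (f j) z 1) ^ 2 + (fderiv ℝ (f j) z Complex.I) ^ 2)) -
      ∫ θ in (-(Real.pi / 2))..(Real.pi / 2), (f j (Complex.exp (θ * Complex.I))) ^ 2)

/-- A compatible triple: each `f j` is C¹ near `D̂` and `f₁+f₂+f₃ = 0` on `γ`. -/
def Compatible (f : Fin 3 → ℂ → ℝ) : Prop :=
  (∀ j, ∃ V : Set ℂ, IsOpen V ∧ Dhat ⊆ V ∧ ContDiffOn ℝ 1 (f j) V) ∧
  ∀ z ∈ gammaJ, f 0 z + f 1 z + f 2 z = 0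


/-! ### Auxiliary analytic lemmas -/

section Aux

open Complex Set

variable {F' : Type*} [NormedAddCommGroup F'] [NormedSpace ℝ F']

/-- Unconditional decomposition of a real Fréchet derivative on `ℂ` along the basis `1, I`. -/
lemma fderiv_decomp (f : ℂ → F') (z v : ℂ) :
    fderiv ℝ f z v = v.re • fderiv ℝ f z 1 + v.im • fderiv ℝ f z Complex.I := by
  have h : v = v.re • (1 : ℂ) + v.im • Complex.I := by
    simp [Complex.real_smul, Complex.re_add_im]
  conv_lhs => rw [h]
  rw [map_add, map_smul, map_smul]

lemma contDiffOn_fderiv_apply {f : ℂ → F'} {U : Set ℂ}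
    (hf : ContDiffOn ℝ (⊤ : ℕ∞) f U) (hU : IsOpen U) (v : ℂ) :
    ContDiffOn ℝ (⊤ : ℕ∞) (fun z => fderiv ℝ f z v) U :=
  (hf.fderiv_of_isOpen hU (by simp)).clm_apply contDiffOn_const

lemma diffAt_of_contDiffOn {f : ℂ → F'} {U : Set ℂ} {z : ℂ}
    (hf : ContDiffOn ℝ (⊤ : ℕ∞) f U) (hU : IsOpen U) (hz : z ∈ U) :
    DifferentiableAt ℝ f z :=
  ((hf.differentiableOn (by simp)).differentiableAt (hU.mem_nhds hz))

/-- Schwarz symmetry of second partials for a `C^∞` function on an open set. -/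
lemma schwarz_symm {f : ℂ → ℝ} {U : Set ℂ} {z : ℂ}
    (hf : ContDiffOn ℝ (⊤ : ℕ∞) f U) (hU : IsOpen U) (hz : z ∈ U) :
    fderiv ℝ (fun w => fderiv ℝ f w 1) z Complex.I
      = fderiv ℝ (fun w => fderiv ℝ f w Complex.I) z 1 := by
  have hF : ContDiffOn ℝ (⊤ : ℕ∞) (fderiv ℝ f) U := hf.fderiv_of_isOpen hU (by simp)
  have hF' : DifferentiableAt ℝ (fderiv ℝ f) z := diffAt_of_contDiffOn hF hU hz
  have hev : ∀ᶠ y in nhds z, HasFDerivAt f (fderiv ℝ f y) y := by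
    filter_upwards [hU.mem_nhds hz] with y hy
    exact (diffAt_of_contDiffOn hf hU hy).hasFDerivAt
  have hsymm := second_derivative_symmetric_of_eventually hev hF'.hasFDerivAt
  have e1 : fderiv ℝ (fun w => fderiv ℝ f w 1) z
      = (fderiv ℝ f z).comp (fderiv ℝ (fun _ : ℂ => (1:ℂ)) z)
        + (fderiv ℝ (fderiv ℝ f) z).flip 1 :=
    fderiv_clm_apply hF' (differentiableAt_const _)
  have e2 : fderiv ℝ (fun w => fderiv ℝ f w Complex.I) z
      = (fderiv ℝ f z).comp (fderiv ℝ (fun _ : ℂ => Complex.I) z)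
        + (fderiv ℝ (fderiv ℝ f) z).flip Complex.I :=
    fderiv_clm_apply hF' (differentiableAt_const _)
  rw [e1, e2]
  simp only [fderiv_const, fderiv_fun_const, ContinuousLinearMap.comp_zero,
    Pi.zero_apply, ContinuousLinearMap.zero_apply,
    ContinuousLinearMap.add_apply, ContinuousLinearMap.flip_apply,
    ContinuousLinearMap.comp_apply, ContinuousLinearMap.zero_comp, zero_add]
  exact hsymm Complex.I 1

/-- Normal form of the first Wirtinger derivative of (the complexification of) `f`. -/
def phiF (f : ℂ → ℝ) : ℂ → ℂ := fun w =>
  (1/2 : ℂ) * ((fderiv ℝ f w 1 : ℝ) : ℂ)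
    - (Complex.I/2) * ((fderiv ℝ f w Complex.I : ℝ) : ℂ)

variable {f : ℂ → ℝ} {U : Set ℂ} {z : ℂ}

lemma fderiv_ofReal_comp' {f : ℂ → ℝ} {z : ℂ} (hf : DifferentiableAt ℝ f z) (v : ℂ) :
    fderiv ℝ (fun w => ((f w : ℝ) : ℂ)) z v = ((fderiv ℝ f z v : ℝ) : ℂ) := by
  have h : fderiv ℝ (fun w => ((f w : ℝ) : ℂ)) z
      = Complex.ofRealCLM.comp (fderiv ℝ f z) :=
    (Complex.ofRealCLM.hasFDerivAt.comp z hf.hasFDerivAt).fderiv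
  rw [h]; rfl

lemma dzC_ofReal (hf : DifferentiableAt ℝ f z) :
    dzC (fun w => ((f w : ℝ) : ℂ)) z = phiF f z := by
  unfold dzC phiF
  rw [fderiv_ofReal_comp' hf 1, fderiv_ofReal_comp' hf Complex.I]
  ring

lemma diffAt_vX (hf : ContDiffOn ℝ (⊤ : ℕ∞) f U) (hU : IsOpen U) (hz : z ∈ U) (v : ℂ) :
    DifferentiableAt ℝ (fun w => fderiv ℝ f w v) z := by
  have h : ContDiffOn ℝ (⊤ : ℕ∞) (fun w => fderiv ℝ f w v) U :=
    (hf.fderiv_of_isOpen hU (by simp)).clm_apply contDiffOn_const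
  exact (h.differentiableOn (by simp)).differentiableAt (hU.mem_nhds hz)

lemma hasFDerivAt_phiF (hf : ContDiffOn ℝ (⊤ : ℕ∞) f U) (hU : IsOpen U) (hz : z ∈ U) :
    HasFDerivAt (phiF f)
      ((1/2 : ℂ) • Complex.ofRealCLM.comp (fderiv ℝ (fun w => fderiv ℝ f w 1) z)
        - (Complex.I/2 : ℂ) • Complex.ofRealCLM.comp
            (fderiv ℝ (fun w => fderiv ℝ f w Complex.I) z)) z := by
  have h1 : HasFDerivAt (fun w => ((fderiv ℝ f w 1 : ℝ) : ℂ))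
      (Complex.ofRealCLM.comp (fderiv ℝ (fun w => fderiv ℝ f w 1) z)) z :=
    Complex.ofRealCLM.hasFDerivAt.comp z (diffAt_vX hf hU hz 1).hasFDerivAt
  have h2 : HasFDerivAt (fun w => ((fderiv ℝ f w Complex.I : ℝ) : ℂ))
      (Complex.ofRealCLM.comp (fderiv ℝ (fun w => fderiv ℝ f w Complex.I) z)) z :=
    Complex.ofRealCLM.hasFDerivAt.comp z (diffAt_vX hf hU hz Complex.I).hasFDerivAt
  exact (h1.const_mul ((1:ℂ)/2)).sub (h2.const_mul (Complex.I/2))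

lemma fderiv_phiF_apply (hf : ContDiffOn ℝ (⊤ : ℕ∞) f U) (hU : IsOpen U) (hz : z ∈ U) (v : ℂ) :
    fderiv ℝ (phiF f) z v
      = (1/2 : ℂ) * ((fderiv ℝ (fun w => fderiv ℝ f w 1) z v : ℝ) : ℂ)
        - (Complex.I/2) * ((fderiv ℝ (fun w => fderiv ℝ f w Complex.I) z v : ℝ) : ℂ) := by
  rw [(hasFDerivAt_phiF hf hU hz).fderiv]
  simp [ContinuousLinearMap.smul_apply, ContinuousLinearMap.comp_apply, Complex.real_smul,
    Complex.ofRealCLM_apply]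

/-- Key identity: `u_{zz}` in terms of the real second partials `a = u_xx`, `b = u_xy`,
using harmonicity and Schwarz symmetry. -/
lemma uzz_formula (hf : ContDiffOn ℝ (⊤ : ℕ∞) f U) (hU : IsOpen U) (hz : z ∈ U)
    (hlap : lap f z = 0) :
    dzC (fun w => dzC (fun w' => ((f w' : ℝ) : ℂ)) w) z
      = (((fderiv ℝ (fun w => fderiv ℝ f w 1) z 1 : ℝ) : ℂ)
          - Complex.I * ((fderiv ℝ (fun w => fderiv ℝ f w 1) z Complex.I : ℝ) : ℂ)) / 2 := by
  have hlap' : fderiv ℝ (fun w => fderiv ℝ f w 1) z 1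
      + fderiv ℝ (fun w => fderiv ℝ f w Complex.I) z Complex.I = 0 := hlap
  have hEq : (fun w => dzC (fun w' => ((f w' : ℝ) : ℂ)) w) =ᶠ[nhds z] phiF f := by
    filter_upwards [hU.mem_nhds hz] with w hw
    exact dzC_ofReal (diffAt_of_contDiffOn hf hU hw)
  have hfd : fderiv ℝ (fun w => dzC (fun w' => ((f w' : ℝ) : ℂ)) w) z
      = fderiv ℝ (phiF f) z := hEq.fderiv_eq
  rw [show dzC (fun w => dzC (fun w' => ((f w' : ℝ) : ℂ)) w) z
      = (1/2) * (fderiv ℝ (fun w => dzC (fun w' => ((f w' : ℝ) : ℂ)) w) z 1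
        - Complex.I * fderiv ℝ (fun w => dzC (fun w' => ((f w' : ℝ) : ℂ)) w) z Complex.I) from rfl]
  rw [hfd, fderiv_phiF_apply hf hU hz 1, fderiv_phiF_apply hf hU hz Complex.I]
  have hsch := schwarz_symm hf hU hz
  set A := fderiv ℝ (fun w => fderiv ℝ f w 1) z 1 with hA
  set Bx := fderiv ℝ (fun w => fderiv ℝ f w 1) z Complex.I with hBx
  set By := fderiv ℝ (fun w => fderiv ℝ f w Complex.I) z 1 with hBy
  set Dd := fderiv ℝ (fun w => fderiv ℝ f w Complex.I) z Complex.I with hDd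
  have h1 : By = Bx := hsch.symm
  have h2 : Dd = -A := by linarith
  rw [h1, h2]
  push_cast
  ring_nf
  rw [Complex.I_sq]
  ring

/-- Holomorphy of the Wirtinger derivative: the real Fréchet derivative of `phiF f`
acts as complex multiplication by `u_zz`. -/
lemma fderiv_phiF_mul (hf : ContDiffOn ℝ (⊤ : ℕ∞) f U) (hU : IsOpen U) (hz : z ∈ U)
    (hlap : lap f z = 0) (v : ℂ) :
    fderiv ℝ (phiF f) z v
      = (dzC (fun w => dzC (fun w' => ((f w' : ℝ) : ℂ)) w) z) * v := by
  have hlap' : fderiv ℝ (fun w => fderiv ℝ f w 1) z 1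
      + fderiv ℝ (fun w => fderiv ℝ f w Complex.I) z Complex.I = 0 := hlap
  rw [uzz_formula hf hU hz hlap, fderiv_phiF_apply hf hU hz v]
  have hx := fderiv_decomp (fun w => fderiv ℝ f w 1) z v
  have hy := fderiv_decomp (fun w => fderiv ℝ f w Complex.I) z v
  have hsch := schwarz_symm hf hU hz
  set A := fderiv ℝ (fun w => fderiv ℝ f w 1) z 1 with hA
  set Bx := fderiv ℝ (fun w => fderiv ℝ f w 1) z Complex.I with hBx
  set By := fderiv ℝ (fun w => fderiv ℝ f w Complex.I) z 1 with hBy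
  set Dd := fderiv ℝ (fun w => fderiv ℝ f w Complex.I) z Complex.I with hDd
  have h1 : By = Bx := hsch.symm
  have h2 : Dd = -A := by linarith
  rw [hx, hy, h1, h2]
  have hv : v = ((v.re : ℝ) : ℂ) + ((v.im : ℝ) : ℂ) * Complex.I := (Complex.re_add_im v).symm
  rw [smul_eq_mul, smul_eq_mul, smul_eq_mul, smul_eq_mul]
  push_cast
  conv_rhs => rw [hv]
  ring_nf
  rw [Complex.I_sq]
  ring

/-- two functions equal near `t` have equal derivatives. -/
lemma derivs_eq_of_eq_nhds {E : Type*} [NormedAddCommGroup E] [NormedSpace ℝ E]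
    {f g : ℝ → E} {s : Set ℝ} {t : ℝ} {a b : E}
    (hs : s ∈ nhds t) (heq : ∀ x ∈ s, f x = g x)
    (hf : HasDerivAt f a t) (hg : HasDerivAt g b t) : a = b := by
  have h : f =ᶠ[nhds t] g := Filter.eventually_of_mem hs heq
  exact (hf.congr_of_eventuallyEq h.symm).unique hg

lemma eq_zero_at_closure {f : ℂ → ℝ} {s : Set ℂ} {x : ℂ}
    (hf : ContinuousAt f x) (hx : x ∈ closure s) (h0 : ∀ y ∈ s, f y = 0) : f x = 0 := by
  have hne : (nhdsWithin x s).NeBot := mem_closure_iff_nhdsWithin_neBot.1 hx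
  have h2 : Filter.Tendsto f (nhdsWithin x s) (nhds (f x)) := hf.continuousWithinAt
  have h3 : Filter.Tendsto f (nhdsWithin x s) (nhds 0) := by
    apply Filter.Tendsto.congr' _ tendsto_const_nhds
    filter_upwards [self_mem_nhdsWithin] with y hy
    exact (h0 y hy).symm
  exact tendsto_nhds_unique h2 h3

lemma hasDerivAt_Imul (y : ℝ) :
    HasDerivAt (fun s : ℝ => Complex.I * (s : ℂ)) Complex.I y := by
  have h : HasDerivAt (fun s : ℝ => ((s : ℝ) : ℂ)) 1 y := by
    simpa using (hasDerivAt_id y).ofReal_comp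
  simpa using h.const_mul Complex.I

lemma hasDerivAt_cexpI (θ : ℝ) :
    HasDerivAt (fun s : ℝ => Complex.exp ((s : ℂ) * Complex.I))
      (Complex.I * Complex.exp ((θ : ℂ) * Complex.I)) θ := by
  have h : HasDerivAt (fun s : ℝ => ((s : ℝ) : ℂ)) 1 θ := by
    simpa using (hasDerivAt_id θ).ofReal_comp
  have h1 : HasDerivAt (fun s : ℝ => ((s : ℂ) * Complex.I)) Complex.I θ := by
    simpa using h.mul_const Complex.I
  simpa [mul_comm] using h1.cexp

/-- composition of a function on `ℂ` with a curve. -/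
lemma hasDerivAt_comp_curve {F' : Type*} [NormedAddCommGroup F'] [NormedSpace ℝ F']
    {f : ℂ → F'} {z : ℂ} (hf : DifferentiableAt ℝ f z)
    {c : ℝ → ℂ} {c' : ℂ} {t : ℝ} (hc : HasDerivAt c c' t) (hzc : c t = z) :
    HasDerivAt (fun s => f (c s)) (fderiv ℝ f z c') t := by
  subst hzc
  exact (hf.hasFDerivAt.comp_hasDerivAt t hc)

lemma im_half_sq (a b : ℝ) : (((((a : ℝ) : ℂ) - Complex.I * ((b : ℝ) : ℂ)) / 2) ^ 2).im
    = -(a * b) / 2 := by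
  have h : ((((a : ℝ) : ℂ) - Complex.I * ((b : ℝ) : ℂ)) / 2) ^ 2
      = (((a^2 - b^2)/4 : ℝ) : ℂ) - Complex.I * (((a*b)/2 : ℝ) : ℂ) := by
    push_cast; ring_nf; rw [Complex.I_sq]; ring
  rw [h, Complex.sub_im, Complex.ofReal_im, Complex.mul_im]
  simp
  ring

lemma mul_psi_re (z : ℂ) (p q : ℝ) :
    (z * ((((p : ℝ) : ℂ) - Complex.I * ((q : ℝ) : ℂ)) / 2)).re
      = (z.re * p + z.im * q) / 2 := by
  simp [Complex.mul_re, Complex.mul_im, Complex.div_re, Complex.div_im]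
  ring

lemma mul_psi_im (z : ℂ) (p q : ℝ) :
    (z * ((((p : ℝ) : ℂ) - Complex.I * ((q : ℝ) : ℂ)) / 2)).im
      = (z.im * p - z.re * q) / 2 := by
  simp [Complex.mul_re, Complex.mul_im, Complex.div_re, Complex.div_im]
  ring

lemma psi_re (f : ℂ → ℝ) (z : ℂ) :
    (z * phiF f z).re = (z.re * fderiv ℝ f z 1 + z.im * fderiv ℝ f z Complex.I) / 2 := by
  rw [show phiF f z = (((fderiv ℝ f z 1 : ℝ) : ℂ)
    - Complex.I * ((fderiv ℝ f z Complex.I : ℝ) : ℂ)) / 2 by unfold phiF; ring]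
  exact mul_psi_re z _ _

lemma psi_im (f : ℂ → ℝ) (z : ℂ) :
    (z * phiF f z).im = (z.im * fderiv ℝ f z 1 - z.re * fderiv ℝ f z Complex.I) / 2 := by
  rw [show phiF f z = (((fderiv ℝ f z 1 : ℝ) : ℂ)
    - Complex.I * ((fderiv ℝ f z Complex.I : ℝ) : ℂ)) / 2 by unfold phiF; ring]
  exact mul_psi_im z _ _

lemma gamma_subset_Dhat : gammaJ ⊆ Dhat := by
  rintro z ⟨h1, h2⟩
  constructor
  · have h : ‖z‖ = |z.im| := by
      rw [Complex.norm_def, Complex.normSq_apply, h1]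
      rw [show (0:ℝ) * 0 + z.im * z.im = z.im ^ 2 by ring, Real.sqrt_sq_eq_abs]
    rw [h]; exact h2
  · rw [h1]

lemma sigma_subset_Dhat : sigmaArc ⊆ Dhat := fun z hz => ⟨le_of_eq hz.1, hz.2⟩

lemma mem_gamma_of {y : ℝ} (hy : |y| ≤ 1) : Complex.I * (y : ℂ) ∈ gammaJ := by
  constructor <;> simp [Complex.mul_re, Complex.mul_im, hy]

end Aux

lemma key_gamma (u : Fin 3 → ℂ → Fin 3 → ℝ) (U : Set ℂ) (hyp : StandingHyp u U)
    {y₀ : ℝ} (hy₀ : y₀ ∈ Set.Ioo (-1:ℝ) 1) :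
    (((Complex.I * (y₀ : ℂ)) ^ 4) * hfun u (Complex.I * (y₀ : ℂ))).im = 0 := by
  obtain ⟨hU, hDU, hsm, hlap, hconf, hjun, hY, hfb⟩ := hyp
  have hmemγ : ∀ s ∈ Set.Ioo (-1:ℝ) 1, Complex.I * (s:ℂ) ∈ gammaJ := fun s hs =>
    mem_gamma_of (le_of_lt (abs_lt.mpr hs))
  have hmemU : ∀ s ∈ Set.Ioo (-1:ℝ) 1, Complex.I * (s:ℂ) ∈ U := fun s hs =>
    hDU (gamma_subset_Dhat (hmemγ s hs))
  have hz₀U : Complex.I * (y₀:ℂ) ∈ U := hmemU y₀ hy₀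
  have hnb : Set.Ioo (-1:ℝ) 1 ∈ nhds y₀ := isOpen_Ioo.mem_nhds hy₀
  -- first-order curve derivatives
  have hdU' : ∀ (j : Fin 3) (k : Fin 3), ∀ s ∈ Set.Ioo (-1:ℝ) 1,
      HasDerivAt (fun t : ℝ => u j (Complex.I * (t:ℂ)) k)
        (fderiv ℝ (fun w => u j w k) (Complex.I * (s:ℂ)) Complex.I) s := fun j k s hs =>
    hasDerivAt_comp_curve (diffAt_of_contDiffOn (hsm j k) hU (hmemU s hs))
      (hasDerivAt_Imul s) rfl
  have hdP : ∀ (j : Fin 3) (k : Fin 3), ∀ s ∈ Set.Ioo (-1:ℝ) 1,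
      HasDerivAt (fun t : ℝ => fderiv ℝ (fun w => u j w k) (Complex.I * (t:ℂ)) 1)
        (fderiv ℝ (fun w => fderiv ℝ (fun w' => u j w' k) w 1) (Complex.I * (s:ℂ)) Complex.I)
        s := fun j k s hs =>
    hasDerivAt_comp_curve (diffAt_vX (hsm j k) hU (hmemU s hs) 1) (hasDerivAt_Imul s) rfl
  have hdQ : ∀ (j : Fin 3) (k : Fin 3), ∀ s ∈ Set.Ioo (-1:ℝ) 1,
      HasDerivAt (fun t : ℝ => fderiv ℝ (fun w => u j w k) (Complex.I * (t:ℂ)) Complex.I)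
        (fderiv ℝ (fun w => fderiv ℝ (fun w' => u j w' k) w Complex.I)
          (Complex.I * (s:ℂ)) Complex.I) s := fun j k s hs =>
    hasDerivAt_comp_curve (diffAt_vX (hsm j k) hU (hmemU s hs) Complex.I)
      (hasDerivAt_Imul s) rfl
  -- first tangential derivative of the junction identity
  have hQ01 : ∀ (k : Fin 3), ∀ s ∈ Set.Ioo (-1:ℝ) 1,
      fderiv ℝ (fun w => u 0 w k) (Complex.I * (s:ℂ)) Complex.I
        = fderiv ℝ (fun w => u 1 w k) (Complex.I * (s:ℂ)) Complex.I := fun k s hs =>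
    derivs_eq_of_eq_nhds (isOpen_Ioo.mem_nhds hs)
      (fun t ht => congrFun ((hjun _ (hmemγ t ht)).1) k) (hdU' 0 k s hs) (hdU' 1 k s hs)
  have hQ12 : ∀ (k : Fin 3), ∀ s ∈ Set.Ioo (-1:ℝ) 1,
      fderiv ℝ (fun w => u 1 w k) (Complex.I * (s:ℂ)) Complex.I
        = fderiv ℝ (fun w => u 2 w k) (Complex.I * (s:ℂ)) Complex.I := fun k s hs =>
    derivs_eq_of_eq_nhds (isOpen_Ioo.mem_nhds hs)
      (fun t ht => congrFun ((hjun _ (hmemγ t ht)).2) k) (hdU' 1 k s hs) (hdU' 2 k s hs)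
  -- second tangential derivatives of the junction identity
  have hD01 : ∀ k : Fin 3,
      fderiv ℝ (fun w => fderiv ℝ (fun w' => u 0 w' k) w Complex.I)
        (Complex.I * (y₀:ℂ)) Complex.I
      = fderiv ℝ (fun w => fderiv ℝ (fun w' => u 1 w' k) w Complex.I)
        (Complex.I * (y₀:ℂ)) Complex.I := fun k =>
    derivs_eq_of_eq_nhds hnb (fun t ht => hQ01 k t ht) (hdQ 0 k y₀ hy₀) (hdQ 1 k y₀ hy₀)
  have hD12 : ∀ k : Fin 3,
      fderiv ℝ (fun w => fderiv ℝ (fun w' => u 1 w' k) w Complex.I)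
        (Complex.I * (y₀:ℂ)) Complex.I
      = fderiv ℝ (fun w => fderiv ℝ (fun w' => u 2 w' k) w Complex.I)
        (Complex.I * (y₀:ℂ)) Complex.I := fun k =>
    derivs_eq_of_eq_nhds hnb (fun t ht => hQ12 k t ht) (hdQ 1 k y₀ hy₀) (hdQ 2 k y₀ hy₀)
  -- differentiated Y-condition
  have hBsum : ∀ k : Fin 3,
      fderiv ℝ (fun w => fderiv ℝ (fun w' => u 0 w' k) w 1) (Complex.I*(y₀:ℂ)) Complex.I
      + fderiv ℝ (fun w => fderiv ℝ (fun w' => u 1 w' k) w 1) (Complex.I*(y₀:ℂ)) Complex.I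
      + fderiv ℝ (fun w => fderiv ℝ (fun w' => u 2 w' k) w 1) (Complex.I*(y₀:ℂ)) Complex.I
      = 0 := by
    intro k
    have hsum := ((hdP 0 k y₀ hy₀).add (hdP 1 k y₀ hy₀)).add (hdP 2 k y₀ hy₀)
    exact derivs_eq_of_eq_nhds hnb (fun t ht => hY _ (hmemγ t ht) k) hsum
      (hasDerivAt_const y₀ (0:ℝ))
  -- harmonicity
  have hAD : ∀ (j : Fin 3) (k : Fin 3),
      fderiv ℝ (fun w => fderiv ℝ (fun w' => u j w' k) w 1) (Complex.I*(y₀:ℂ)) 1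
      = - fderiv ℝ (fun w => fderiv ℝ (fun w' => u j w' k) w Complex.I)
          (Complex.I*(y₀:ℂ)) Complex.I := by
    intro j k
    have h' : fderiv ℝ (fun w => fderiv ℝ (fun w' => u j w' k) w 1) (Complex.I*(y₀:ℂ)) 1
      + fderiv ℝ (fun w => fderiv ℝ (fun w' => u j w' k) w Complex.I)
          (Complex.I*(y₀:ℂ)) Complex.I = 0 := hlap j k _ hz₀U
    linarith
  -- uzz values
  have huzz : ∀ (j : Fin 3) (k : Fin 3), uzz (u j) (Complex.I*(y₀:ℂ)) k
      = (((fderiv ℝ (fun w => fderiv ℝ (fun w' => u j w' k) w 1) (Complex.I*(y₀:ℂ)) 1 : ℝ) : ℂ)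
        - Complex.I * ((fderiv ℝ (fun w => fderiv ℝ (fun w' => u j w' k) w 1)
            (Complex.I*(y₀:ℂ)) Complex.I : ℝ) : ℂ)) / 2 :=
    fun j k => uzz_formula (hsm j k) hU hz₀U (hlap j k _ hz₀U)
  -- final computation
  have him : (hfun u (Complex.I*(y₀:ℂ))).im = 0 := by
    have h1 : ∀ (j : Fin 3) (k : Fin 3), ((uzz (u j) (Complex.I*(y₀:ℂ)) k)^2).im
        = -(fderiv ℝ (fun w => fderiv ℝ (fun w' => u j w' k) w 1) (Complex.I*(y₀:ℂ)) 1
          * fderiv ℝ (fun w => fderiv ℝ (fun w' => u j w' k) w 1)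
              (Complex.I*(y₀:ℂ)) Complex.I)/2 := by
      intro j k
      rw [huzz j k]
      exact im_half_sq _ _
    show (∑ j : Fin 3, ∑ k : Fin 3, (uzz (u j) (Complex.I*(y₀:ℂ)) k)^2).im = 0
    simp only [Complex.im_sum]
    rw [Finset.sum_congr rfl fun j _ => Finset.sum_congr rfl fun k _ => h1 j k]
    rw [Finset.sum_comm]
    apply Finset.sum_eq_zero
    intro k _
    rw [Fin.sum_univ_three]
    rw [hAD 0 k, hAD 1 k, hAD 2 k]
    have hD02 : fderiv ℝ (fun w => fderiv ℝ (fun w' => u 0 w' k) w Complex.I)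
        (Complex.I * (y₀:ℂ)) Complex.I
      = fderiv ℝ (fun w => fderiv ℝ (fun w' => u 2 w' k) w Complex.I)
        (Complex.I * (y₀:ℂ)) Complex.I := (hD01 k).trans (hD12 k)
    rw [← hD02, ← hD01 k]
    linear_combination (fderiv ℝ (fun w => fderiv ℝ (fun w' => u 0 w' k) w Complex.I)
        (Complex.I * (y₀:ℂ)) Complex.I / 2) * hBsum k
  have hz4 : (Complex.I * (y₀:ℂ))^4 = (((y₀^4 : ℝ)) : ℂ) := by
    rw [show (Complex.I * (y₀:ℂ))^4 = (Complex.I^2)^2 * ((y₀:ℂ))^4 by ring, Complex.I_sq]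
    push_cast; ring
  rw [hz4, Complex.mul_im, him, Complex.ofReal_im]
  ring

/-- Abstract form of the per-sheet boundary computation along the free-boundary arc. -/
lemma sigma_sheet (Ufn : Fin 3 → ℝ → ℝ) (ψ : Fin 3 → ℝ → ℂ) (D : Fin 3 → ℂ) (cf : ℝ → ℝ)
    (J : Set ℝ) (θ₀ : ℝ) (hJo : IsOpen J) (hθ₀ : θ₀ ∈ J)
    (hdU : ∀ (k : Fin 3), ∀ s ∈ J, HasDerivAt (Ufn k) (-2 * (ψ k s).im) s)
    (hdψ : ∀ k : Fin 3, HasDerivAt (ψ k) (D k) θ₀)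
    (I1 : ∀ s ∈ J, ∑ k : Fin 3, (ψ k s) * (ψ k s) = 0)
    (I2 : ∀ s ∈ J, ∑ k : Fin 3, Ufn k s * Ufn k s = 1)
    (hcfeq : ∀ s ∈ J, cf s = 2 * ∑ i : Fin 3, (ψ i s).re * Ufn i s)
    (I4 : ∀ s ∈ J, ∀ k : Fin 3, 2 * (ψ k s).re = cf s * Ufn k s) :
    (∑ k : Fin 3, (-Complex.I * D k - ψ k θ₀) ^ 2).im = 0 := by
  have hnb : J ∈ nhds θ₀ := hJo.mem_nhds hθ₀
  -- derivative components of ψ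
  have hre : ∀ k : Fin 3, HasDerivAt (fun s => (ψ k s).re) ((D k).re) θ₀ :=
    fun k => (Complex.reCLM.hasFDerivAt.comp_hasDerivAt θ₀ (hdψ k))
  have him : ∀ k : Fin 3, HasDerivAt (fun s => (ψ k s).im) ((D k).im) θ₀ :=
    fun k => (Complex.imCLM.hasFDerivAt.comp_hasDerivAt θ₀ (hdψ k))
  -- derivative of cf
  set E : ℝ := 2 * ∑ k : Fin 3,
    ((D k).re * Ufn k θ₀ + (ψ k θ₀).re * (-2 * (ψ k θ₀).im)) with hE
  have hdcf : HasDerivAt cf E θ₀ := by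
    have h := (HasDerivAt.sum
      (fun (k : Fin 3) (_ : k ∈ Finset.univ) => (hre k).mul (hdU k θ₀ hθ₀))).const_mul (2:ℝ)
    apply h.congr_of_eventuallyEq
    filter_upwards [hnb] with s hs
    exact hcfeq s hs
  -- tangential derivative of |U|^2 = 1
  have I3 : ∀ s ∈ J, ∑ k : Fin 3, Ufn k s * (ψ k s).im = 0 := by
    intro s hs
    have hder : HasDerivAt (fun t => ∑ k : Fin 3, Ufn k t * Ufn k t)
        (∑ k : Fin 3, ((-2*(ψ k s).im) * Ufn k s + Ufn k s * (-2*(ψ k s).im))) s :=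
      HasDerivAt.fun_sum fun k _ => (hdU k s hs).mul (hdU k s hs)
    have h0 := derivs_eq_of_eq_nhds (hJo.mem_nhds hs) I2 hder (hasDerivAt_const s (1:ℝ))
    have h1 : ∑ k : Fin 3, ((-2*(ψ k s).im) * Ufn k s + Ufn k s * (-2*(ψ k s).im))
        = -4 * ∑ k : Fin 3, Ufn k s * (ψ k s).im := by
      rw [Finset.mul_sum]; exact Finset.sum_congr rfl fun k _ => by ring
    rw [h1] at h0
    linarith
  -- |Im ψ|^2 = cf^2/4
  have I5 : ∀ s ∈ J, ∑ k : Fin 3, (ψ k s).im * (ψ k s).im = cf s * cf s / 4 := by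
    intro s hs
    have h1 : (∑ k : Fin 3, ψ k s * ψ k s).re = 0 := by rw [I1 s hs]; simp
    rw [Complex.re_sum] at h1
    rw [Finset.sum_congr rfl fun (k : Fin 3) _ => Complex.mul_re (ψ k s) (ψ k s)] at h1
    rw [Finset.sum_sub_distrib] at h1
    have h3 : ∑ k : Fin 3, (ψ k s).re * (ψ k s).re = cf s * cf s / 4 := by
      have h4 : ∀ k : Fin 3, (ψ k s).re * (ψ k s).re
          = cf s * cf s / 4 * (Ufn k s * Ufn k s) := by
        intro k
        have h5 : (ψ k s).re = cf s * Ufn k s / 2 := by linarith [I4 s hs k]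
        rw [h5]; ring
      rw [Finset.sum_congr rfl fun k _ => h4 k, ← Finset.mul_sum, I2 s hs, mul_one]
    linarith
  -- differentiate I1 at θ₀
  have J1 : ∑ k : Fin 3, ψ k θ₀ * D k = 0 := by
    have hL : HasDerivAt (fun s => ∑ k : Fin 3, ψ k s * ψ k s)
        (∑ k : Fin 3, (D k * ψ k θ₀ + ψ k θ₀ * D k)) θ₀ :=
      HasDerivAt.fun_sum fun k _ => (hdψ k).mul (hdψ k)
    have h0 := derivs_eq_of_eq_nhds hnb I1 hL (hasDerivAt_const θ₀ (0:ℂ))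
    have h1 : ∑ k : Fin 3, (D k * ψ k θ₀ + ψ k θ₀ * D k)
        = 2 * ∑ k : Fin 3, ψ k θ₀ * D k := by
      rw [Finset.mul_sum]; exact Finset.sum_congr rfl fun k _ => by ring
    rw [h1] at h0
    exact (mul_eq_zero.mp h0).resolve_left two_ne_zero
  -- differentiate I3 at θ₀
  have J3 : ∑ k : Fin 3, ((-2 * (ψ k θ₀).im) * (ψ k θ₀).im + Ufn k θ₀ * (D k).im) = 0 := by
    have hL : HasDerivAt (fun s => ∑ k : Fin 3, Ufn k s * (ψ k s).im)
        (∑ k : Fin 3, ((-2 * (ψ k θ₀).im) * (ψ k θ₀).im + Ufn k θ₀ * (D k).im)) θ₀ :=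
      HasDerivAt.fun_sum fun k _ => (hdU k θ₀ hθ₀).mul (him k)
    exact derivs_eq_of_eq_nhds hnb I3 hL (hasDerivAt_const θ₀ (0:ℝ))
  -- differentiate I4 at θ₀
  have J4 : ∀ k : Fin 3, 2 * (D k).re = E * Ufn k θ₀ + cf θ₀ * (-2 * (ψ k θ₀).im) := by
    intro k
    have hL : HasDerivAt (fun s => 2 * (ψ k s).re) (2 * (D k).re) θ₀ := (hre k).const_mul 2
    have hR : HasDerivAt (fun s => cf s * Ufn k s)
        (E * Ufn k θ₀ + cf θ₀ * (-2 * (ψ k θ₀).im)) θ₀ := hdcf.mul (hdU k θ₀ hθ₀)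
    exact derivs_eq_of_eq_nhds hnb (fun s hs => I4 s hs k) hL hR
  -- differentiate I5 at θ₀
  have J5 : ∑ k : Fin 3, ((D k).im * (ψ k θ₀).im + (ψ k θ₀).im * (D k).im)
      = (E * cf θ₀ + cf θ₀ * E) / 4 := by
    have hL : HasDerivAt (fun s => ∑ k : Fin 3, (ψ k s).im * (ψ k s).im)
        (∑ k : Fin 3, ((D k).im * (ψ k θ₀).im + (ψ k θ₀).im * (D k).im)) θ₀ :=
      HasDerivAt.fun_sum fun k _ => (him k).mul (him k)
    have hR : HasDerivAt (fun s => cf s * cf s / 4)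
        ((E * cf θ₀ + cf θ₀ * E) / 4) θ₀ := (hdcf.mul hdcf).div_const 4
    exact derivs_eq_of_eq_nhds hnb I5 hL hR
  -- final real algebra
  have hS1 : ∑ k : Fin 3, Ufn k θ₀ * (D k).im
      = 2 * ∑ k : Fin 3, (ψ k θ₀).im * (ψ k θ₀).im := by
    have h1 : ∑ k : Fin 3, ((-2 * (ψ k θ₀).im) * (ψ k θ₀).im + Ufn k θ₀ * (D k).im)
        = ∑ k : Fin 3, Ufn k θ₀ * (D k).im
          - 2 * ∑ k : Fin 3, (ψ k θ₀).im * (ψ k θ₀).im := by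
      rw [Finset.mul_sum, ← Finset.sum_sub_distrib]
      exact Finset.sum_congr rfl fun k _ => by ring
    rw [h1] at J3
    linarith
  have hS2 : ∑ k : Fin 3, (ψ k θ₀).im * (D k).im = E * cf θ₀ / 4 := by
    have h1 : ∑ k : Fin 3, ((D k).im * (ψ k θ₀).im + (ψ k θ₀).im * (D k).im)
        = 2 * ∑ k : Fin 3, (ψ k θ₀).im * (D k).im := by
      rw [Finset.mul_sum]; exact Finset.sum_congr rfl fun k _ => by ring
    rw [h1] at J5
    linarith
  have hS3 : ∑ k : Fin 3, (ψ k θ₀).im * (ψ k θ₀).im = cf θ₀ * cf θ₀ / 4 := I5 θ₀ hθ₀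
  have hS4 : ∑ k : Fin 3, (D k).re * (D k).im = 0 := by
    have h1 : ∀ k : Fin 3, (D k).re * (D k).im
        = E / 2 * (Ufn k θ₀ * (D k).im) - cf θ₀ * ((ψ k θ₀).im * (D k).im) := by
      intro k
      have h2 : (D k).re = E * Ufn k θ₀ / 2 - cf θ₀ * (ψ k θ₀).im := by linarith [J4 k]
      rw [h2]; ring
    rw [Finset.sum_congr rfl fun k _ => h1 k, Finset.sum_sub_distrib,
      ← Finset.mul_sum, ← Finset.mul_sum, hS1, hS3, hS2]
    ring
  -- expand the conclusion
  have hexp : ∀ k : Fin 3, (-Complex.I * D k - ψ k θ₀) ^ 2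
      = -(D k * D k) + (2*Complex.I) * (ψ k θ₀ * D k) + ψ k θ₀ * ψ k θ₀ := by
    intro k
    linear_combination (D k * D k) * Complex.I_sq
  rw [Finset.sum_congr rfl fun k _ => hexp k, Finset.sum_add_distrib,
    Finset.sum_add_distrib, ← Finset.mul_sum, J1, I1 θ₀ hθ₀]
  simp only [mul_zero, add_zero]
  rw [Finset.sum_neg_distrib, Complex.neg_im, Complex.im_sum]
  rw [Finset.sum_congr rfl fun (k : Fin 3) _ => Complex.mul_im (D k) (D k)]
  have h2 : ∑ k : Fin 3, ((D k).re * (D k).im + (D k).im * (D k).re)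
      = 2 * ∑ k : Fin 3, (D k).re * (D k).im := by
    rw [Finset.mul_sum]; exact Finset.sum_congr rfl fun k _ => by ring
  rw [h2, hS4]
  ring

/-- Conformality makes the complex quadratic expression vanish. -/
lemma conf_complex (z : ℂ) (P Q : Fin 3 → ℝ)
    (horth : ∑ k : Fin 3, P k * Q k = 0)
    (hnorm : ∑ k : Fin 3, P k * P k = ∑ k : Fin 3, Q k * Q k) :
    ∑ k : Fin 3, (z * ((((P k : ℝ) : ℂ) - Complex.I * ((Q k : ℝ) : ℂ)) / 2))
      * (z * ((((P k : ℝ) : ℂ) - Complex.I * ((Q k : ℝ) : ℂ)) / 2)) = 0 := by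
  have h : ∀ k : Fin 3, (z * ((((P k : ℝ) : ℂ) - Complex.I * ((Q k : ℝ) : ℂ)) / 2))
      * (z * ((((P k : ℝ) : ℂ) - Complex.I * ((Q k : ℝ) : ℂ)) / 2))
      = z^2/4 * (((P k * P k : ℝ) : ℂ) - ((Q k * Q k : ℝ) : ℂ))
        - z^2/2 * Complex.I * ((P k * Q k : ℝ) : ℂ) := by
    intro k
    push_cast
    ring_nf
    rw [Complex.I_sq]
    ring
  rw [Finset.sum_congr rfl fun k _ => h k, Finset.sum_sub_distrib,
    ← Finset.mul_sum, ← Finset.mul_sum, Finset.sum_sub_distrib,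
    ← Complex.ofReal_sum, ← Complex.ofReal_sum, ← Complex.ofReal_sum, hnorm, horth]
  simp

lemma key_sigma (u : Fin 3 → ℂ → Fin 3 → ℝ) (U : Set ℂ) (hyp : StandingHyp u U)
    {θ₀ : ℝ} (hθ₀ : θ₀ ∈ Set.Ioo (-(Real.pi/2)) (Real.pi/2)) :
    ((Complex.exp ((θ₀:ℂ) * Complex.I)) ^ 4
      * hfun u (Complex.exp ((θ₀:ℂ) * Complex.I))).im = 0 := by
  obtain ⟨hU, hDU, hsm, hlap, hconf, hjun, hY, hfb⟩ := hyp
  have hmemσ : ∀ s ∈ Set.Ioo (-(Real.pi/2)) (Real.pi/2),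
      Complex.exp ((s:ℂ) * Complex.I) ∈ sigmaArc := by
    intro s hs
    constructor
    · rw [Complex.norm_exp]
      simp
    · have h : (Complex.exp ((s:ℂ) * Complex.I)).re = Real.cos s := by
        rw [Complex.exp_re]
        simp
      rw [h]
      exact Real.cos_nonneg_of_mem_Icc ⟨le_of_lt hs.1, le_of_lt hs.2⟩
  have hmemD : ∀ s ∈ Set.Ioo (-(Real.pi/2)) (Real.pi/2),
      Complex.exp ((s:ℂ) * Complex.I) ∈ Dhat := fun s hs => sigma_subset_Dhat (hmemσ s hs)
  have hmemU : ∀ s ∈ Set.Ioo (-(Real.pi/2)) (Real.pi/2),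
      Complex.exp ((s:ℂ) * Complex.I) ∈ U := fun s hs => hDU (hmemD s hs)
  have hz₀U : Complex.exp ((θ₀:ℂ) * Complex.I) ∈ U := hmemU θ₀ hθ₀
  -- per-sheet claim
  have main : ∀ j : Fin 3, ((Complex.exp ((θ₀:ℂ) * Complex.I))^4
      * ∑ k : Fin 3, (uzz (u j) (Complex.exp ((θ₀:ℂ) * Complex.I)) k)^2).im = 0 := by
    intro j
    -- derivative of the composed map u_j along the arc, at every s in the interval
    have hdU : ∀ (k : Fin 3), ∀ s ∈ Set.Ioo (-(Real.pi/2)) (Real.pi/2),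
        HasDerivAt (fun t : ℝ => u j (Complex.exp ((t:ℂ)*Complex.I)) k)
          (-2 * ((Complex.exp ((s:ℂ)*Complex.I))
            * phiF (fun w => u j w k) (Complex.exp ((s:ℂ)*Complex.I))).im) s := by
      intro k s hs
      have h1 := hasDerivAt_comp_curve (f := fun w => u j w k)
        (diffAt_of_contDiffOn (hsm j k) hU (hmemU s hs)) (hasDerivAt_cexpI s) rfl
      have h2 : fderiv ℝ (fun w => u j w k) (Complex.exp ((s:ℂ)*Complex.I))
          (Complex.I * Complex.exp ((s:ℂ)*Complex.I))
          = -2 * ((Complex.exp ((s:ℂ)*Complex.I))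
            * phiF (fun w => u j w k) (Complex.exp ((s:ℂ)*Complex.I))).im := by
        rw [fderiv_decomp, psi_im]
        simp only [Complex.mul_re, Complex.mul_im, Complex.I_re, Complex.I_im, smul_eq_mul]
        ring
      rw [h2] at h1
      exact h1
    -- derivative of ψ at θ₀ (uses holomorphy)
    have hdψ : ∀ k : Fin 3, HasDerivAt
        (fun s : ℝ => Complex.exp ((s:ℂ)*Complex.I)
          * phiF (fun w => u j w k) (Complex.exp ((s:ℂ)*Complex.I)))
        (Complex.I * Complex.exp ((θ₀:ℂ)*Complex.I)
            * phiF (fun w => u j w k) (Complex.exp ((θ₀:ℂ)*Complex.I))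
          + Complex.exp ((θ₀:ℂ)*Complex.I)
            * (uzz (u j) (Complex.exp ((θ₀:ℂ)*Complex.I)) k
              * (Complex.I * Complex.exp ((θ₀:ℂ)*Complex.I)))) θ₀ := by
      intro k
      have hφd : DifferentiableAt ℝ (phiF (fun w => u j w k))
          (Complex.exp ((θ₀:ℂ)*Complex.I)) :=
        (hasFDerivAt_phiF (hsm j k) hU hz₀U).differentiableAt
      have h1 : HasDerivAt
          (fun s : ℝ => phiF (fun w => u j w k) (Complex.exp ((s:ℂ)*Complex.I)))
          (fderiv ℝ (phiF (fun w => u j w k)) (Complex.exp ((θ₀:ℂ)*Complex.I))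
            (Complex.I * Complex.exp ((θ₀:ℂ)*Complex.I))) θ₀ :=
        hasDerivAt_comp_curve hφd (hasDerivAt_cexpI θ₀) rfl
      have h2 : fderiv ℝ (phiF (fun w => u j w k)) (Complex.exp ((θ₀:ℂ)*Complex.I))
          (Complex.I * Complex.exp ((θ₀:ℂ)*Complex.I))
          = uzz (u j) (Complex.exp ((θ₀:ℂ)*Complex.I)) k
            * (Complex.I * Complex.exp ((θ₀:ℂ)*Complex.I)) :=
        fderiv_phiF_mul (hsm j k) hU hz₀U (hlap j k _ hz₀U) _
      rw [h2] at h1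
      exact (hasDerivAt_cexpI θ₀).mul h1
    -- conformality identity along the arc
    have hφshape : ∀ (k : Fin 3) (s : ℝ), phiF (fun w => u j w k) (Complex.exp ((s:ℂ)*Complex.I))
        = (((fderiv ℝ (fun w => u j w k) (Complex.exp ((s:ℂ)*Complex.I)) 1 : ℝ) : ℂ)
          - Complex.I * ((fderiv ℝ (fun w => u j w k)
              (Complex.exp ((s:ℂ)*Complex.I)) Complex.I : ℝ) : ℂ)) / 2 := by
      intro k s
      unfold phiF
      ring
    have I1 : ∀ s ∈ Set.Ioo (-(Real.pi/2)) (Real.pi/2),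
        ∑ k : Fin 3, ((Complex.exp ((s:ℂ)*Complex.I))
            * phiF (fun w => u j w k) (Complex.exp ((s:ℂ)*Complex.I)))
          * ((Complex.exp ((s:ℂ)*Complex.I))
            * phiF (fun w => u j w k) (Complex.exp ((s:ℂ)*Complex.I))) = 0 := by
      intro s hs
      obtain ⟨horth, hnorm, -⟩ := hconf j _ (hmemD s hs)
      simp only [vX, vY] at horth hnorm
      simp only [pow_two] at hnorm
      rw [Finset.sum_congr rfl fun (k : Fin 3) _ => by rw [hφshape k s]]
      exact conf_complex _ _ _ horth hnorm
    -- free-boundary identities along the arc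
    have I2 : ∀ s ∈ Set.Ioo (-(Real.pi/2)) (Real.pi/2),
        ∑ k : Fin 3, u j (Complex.exp ((s:ℂ)*Complex.I)) k
          * u j (Complex.exp ((s:ℂ)*Complex.I)) k = 1 := by
      intro s hs
      have h := (hfb j _ (hmemσ s hs)).1
      simp only [pow_two] at h
      exact h
    have I4 : ∀ s ∈ Set.Ioo (-(Real.pi/2)) (Real.pi/2), ∀ k : Fin 3,
        2 * ((Complex.exp ((s:ℂ)*Complex.I))
            * phiF (fun w => u j w k) (Complex.exp ((s:ℂ)*Complex.I))).re
          = (2 * ∑ i : Fin 3, ((Complex.exp ((s:ℂ)*Complex.I))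
              * phiF (fun w => u j w i) (Complex.exp ((s:ℂ)*Complex.I))).re
                * u j (Complex.exp ((s:ℂ)*Complex.I)) i)
            * u j (Complex.exp ((s:ℂ)*Complex.I)) k := by
      intro s hs
      obtain ⟨cc, hcc⟩ := (hfb j _ (hmemσ s hs)).2
      simp only [vX, vY] at hcc
      have h2re : ∀ k : Fin 3, 2 * ((Complex.exp ((s:ℂ)*Complex.I))
          * phiF (fun w => u j w k) (Complex.exp ((s:ℂ)*Complex.I))).re
          = cc * u j (Complex.exp ((s:ℂ)*Complex.I)) k := by
        intro k
        rw [psi_re]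
        have h3 := hcc k
        linarith
      have hccf : (2 : ℝ) * ∑ i : Fin 3, ((Complex.exp ((s:ℂ)*Complex.I))
          * phiF (fun w => u j w i) (Complex.exp ((s:ℂ)*Complex.I))).re
            * u j (Complex.exp ((s:ℂ)*Complex.I)) i = cc := by
        rw [Finset.mul_sum]
        rw [Finset.sum_congr rfl fun (i : Fin 3) _ => by
          rw [show (2:ℝ) * (((Complex.exp ((s:ℂ)*Complex.I))
              * phiF (fun w => u j w i) (Complex.exp ((s:ℂ)*Complex.I))).re
                * u j (Complex.exp ((s:ℂ)*Complex.I)) i)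
            = (2 * ((Complex.exp ((s:ℂ)*Complex.I))
              * phiF (fun w => u j w i) (Complex.exp ((s:ℂ)*Complex.I))).re)
                * u j (Complex.exp ((s:ℂ)*Complex.I)) i from by ring, h2re i]]
        rw [Finset.sum_congr rfl fun (i : Fin 3) _ => mul_assoc cc _ _, ← Finset.mul_sum,
          I2 s hs, mul_one]
      intro k
      rw [hccf]
      exact h2re k
    -- apply the abstract sheet lemma
    have hsheet := sigma_sheet
      (fun k s => u j (Complex.exp ((s:ℂ)*Complex.I)) k)
      (fun k s => Complex.exp ((s:ℂ)*Complex.I)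
        * phiF (fun w => u j w k) (Complex.exp ((s:ℂ)*Complex.I)))
      (fun k => Complex.I * Complex.exp ((θ₀:ℂ)*Complex.I)
            * phiF (fun w => u j w k) (Complex.exp ((θ₀:ℂ)*Complex.I))
          + Complex.exp ((θ₀:ℂ)*Complex.I)
            * (uzz (u j) (Complex.exp ((θ₀:ℂ)*Complex.I)) k
              * (Complex.I * Complex.exp ((θ₀:ℂ)*Complex.I))))
      (fun s => 2 * ∑ i : Fin 3, ((Complex.exp ((s:ℂ)*Complex.I))
          * phiF (fun w => u j w i) (Complex.exp ((s:ℂ)*Complex.I))).re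
            * u j (Complex.exp ((s:ℂ)*Complex.I)) i)
      (Set.Ioo (-(Real.pi/2)) (Real.pi/2)) θ₀ isOpen_Ioo hθ₀
      hdU hdψ I1 I2 (fun s _ => rfl) I4
    -- convert
    have hconv : (Complex.exp ((θ₀:ℂ) * Complex.I))^4
        * ∑ k : Fin 3, (uzz (u j) (Complex.exp ((θ₀:ℂ) * Complex.I)) k)^2
        = ∑ k : Fin 3, (-Complex.I * (Complex.I * Complex.exp ((θ₀:ℂ)*Complex.I)
            * phiF (fun w => u j w k) (Complex.exp ((θ₀:ℂ)*Complex.I))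
          + Complex.exp ((θ₀:ℂ)*Complex.I)
            * (uzz (u j) (Complex.exp ((θ₀:ℂ)*Complex.I)) k
              * (Complex.I * Complex.exp ((θ₀:ℂ)*Complex.I))))
          - Complex.exp ((θ₀:ℂ)*Complex.I)
            * phiF (fun w => u j w k) (Complex.exp ((θ₀:ℂ)*Complex.I))) ^ 2 := by
      rw [Finset.mul_sum]
      refine Finset.sum_congr rfl fun k _ => ?_
      have hk : -Complex.I * (Complex.I * Complex.exp ((θ₀:ℂ)*Complex.I)
            * phiF (fun w => u j w k) (Complex.exp ((θ₀:ℂ)*Complex.I))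
          + Complex.exp ((θ₀:ℂ)*Complex.I)
            * (uzz (u j) (Complex.exp ((θ₀:ℂ)*Complex.I)) k
              * (Complex.I * Complex.exp ((θ₀:ℂ)*Complex.I))))
          - Complex.exp ((θ₀:ℂ)*Complex.I)
            * phiF (fun w => u j w k) (Complex.exp ((θ₀:ℂ)*Complex.I))
          = (Complex.exp ((θ₀:ℂ)*Complex.I))^2
            * uzz (u j) (Complex.exp ((θ₀:ℂ)*Complex.I)) k := by
        linear_combination (-(Complex.exp ((θ₀:ℂ)*Complex.I)
            * phiF (fun w => u j w k) (Complex.exp ((θ₀:ℂ)*Complex.I))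
          + (Complex.exp ((θ₀:ℂ)*Complex.I))^2
            * uzz (u j) (Complex.exp ((θ₀:ℂ)*Complex.I)) k)) * Complex.I_sq
      rw [hk]
      ring
    rw [hconv]
    exact hsheet
  rw [show hfun u (Complex.exp ((θ₀:ℂ) * Complex.I))
    = ∑ j : Fin 3, ∑ k : Fin 3, (uzz (u j) (Complex.exp ((θ₀:ℂ) * Complex.I)) k)^2 from rfl]
  rw [Finset.mul_sum, Complex.im_sum]
  exact Finset.sum_eq_zero fun j _ => main j

/-- Smooth expression for `hfun` on `U`. -/
def Eform (u : Fin 3 → ℂ → Fin 3 → ℝ) (w : ℂ) : ℂ :=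
  ∑ j : Fin 3, ∑ k : Fin 3,
    ((((fderiv ℝ (fun w1 => fderiv ℝ (fun w' => u j w' k) w1 1) w 1 : ℝ) : ℂ)
      - Complex.I * ((fderiv ℝ (fun w1 => fderiv ℝ (fun w' => u j w' k) w1 1)
          w Complex.I : ℝ) : ℂ)) / 2) ^ 2

lemma Eform_continuousOn (u : Fin 3 → ℂ → Fin 3 → ℝ) (U : Set ℂ) (hU : IsOpen U)
    (hsm : ∀ j k, ContDiffOn ℝ (⊤ : ℕ∞) (fun z => u j z k) U) :
    ContinuousOn (Eform u) U := by
  apply continuousOn_finset_sum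
  intro j _
  apply continuousOn_finset_sum
  intro k _
  apply ContinuousOn.pow
  apply ContinuousOn.div_const
  apply ContinuousOn.sub
  · exact Complex.continuous_ofReal.comp_continuousOn
      (contDiffOn_fderiv_apply (contDiffOn_fderiv_apply (hsm j k) hU 1) hU 1).continuousOn
  · exact continuousOn_const.mul (Complex.continuous_ofReal.comp_continuousOn
      (contDiffOn_fderiv_apply (contDiffOn_fderiv_apply (hsm j k) hU 1) hU
        Complex.I).continuousOn)

lemma hfun_eq_Eform (u : Fin 3 → ℂ → Fin 3 → ℝ) (U : Set ℂ) (hU : IsOpen U)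
    (hsm : ∀ j k, ContDiffOn ℝ (⊤ : ℕ∞) (fun z => u j z k) U)
    (hlap : ∀ j k, ∀ z ∈ U, lap (fun w => u j w k) z = 0) :
    ∀ w ∈ U, hfun u w = Eform u w := by
  intro w hw
  have h1 : hfun u w = Eform u w :=
    Finset.sum_congr rfl fun j _ => Finset.sum_congr rfl fun k _ => by
      rw [show uzz (u j) w k
        = ((((fderiv ℝ (fun w1 => fderiv ℝ (fun w' => u j w' k) w1 1) w 1 : ℝ) : ℂ)
          - Complex.I * ((fderiv ℝ (fun w1 => fderiv ℝ (fun w' => u j w' k) w1 1)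
              w Complex.I : ℝ) : ℂ)) / 2)
        from uzz_formula (hsm j k) hU hw (hlap j k w hw)]
  exact h1

/-- Under the standing hypotheses, with `h(z) = Σ_j u_{j,zz} · u_{j,zz}`,
the imaginary part of `z⁴ h(z)` vanishes on `γ ∪ σ`. -/
theorem im_z4h_vanishes_on_boundary (u : Fin 3 → ℂ → Fin 3 → ℝ) (U : Set ℂ)
    (hyp : StandingHyp u U) :
    ∀ z ∈ gammaJ ∪ sigmaArc, (z ^ 4 * hfun u z).im = 0 := by
  obtain ⟨hU, hDU, hsm, hlap, -, -, -, -⟩ := id hyp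
  intro z hz
  by_cases hzi : z = Complex.I ∨ z = -Complex.I
  · -- corner points : continuity + density of the open junction segment
    have hzU : z ∈ U := by
      rcases hzi with h | h <;> subst h <;>
        refine hDU (gamma_subset_Dhat ?_) <;> constructor <;> simp
    have hcont : ContinuousAt (fun w => ((w:ℂ)^4 * hfun u w).im) z := by
      have hEc : ContinuousAt (fun w => ((w:ℂ)^4 * Eform u w).im) z := by
        apply ContinuousAt.comp Complex.continuous_im.continuousAt
        exact ((continuous_pow 4).continuousAt).mul
          (((Eform_continuousOn u U hU hsm).continuousAt (hU.mem_nhds hzU)))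
      apply hEc.congr
      filter_upwards [hU.mem_nhds hzU] with w hw
      rw [hfun_eq_Eform u U hU hsm hlap w hw]
    have hclos : z ∈ closure ((fun y : ℝ => Complex.I * (y:ℂ)) '' Set.Ioo (-1:ℝ) 1) := by
      have hcw : Continuous (fun y : ℝ => Complex.I * (y:ℂ)) :=
        continuous_const.mul Complex.continuous_ofReal
      rcases hzi with h | h <;> subst h
      · have h1 : (1:ℝ) ∈ closure (Set.Ioo (-1:ℝ) 1) := by
          rw [closure_Ioo (by norm_num : (-1:ℝ) ≠ 1)]
          exact ⟨by norm_num, le_refl 1⟩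
        have h2 := (hcw.continuousWithinAt
          (s := Set.Ioo (-1:ℝ) 1) (x := 1)).mem_closure_image h1
        simpa using h2
      · have h1 : (-1:ℝ) ∈ closure (Set.Ioo (-1:ℝ) 1) := by
          rw [closure_Ioo (by norm_num : (-1:ℝ) ≠ 1)]
          exact ⟨le_refl _, by norm_num⟩
        have h2 := (hcw.continuousWithinAt
          (s := Set.Ioo (-1:ℝ) 1) (x := -1)).mem_closure_image h1
        simpa using h2
    apply eq_zero_at_closure hcont hclos
    rintro w ⟨y, hy, rfl⟩
    exact key_gamma u U hyp hy
  · push_neg at hzi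
    rcases hz with hzγ | hzσ
    · -- interior junction point
      have hre : z.re = 0 := hzγ.1
      have him1 : |z.im| < 1 := by
        rcases lt_or_eq_of_le hzγ.2 with h | h
        · exact h
        · exfalso
          rcases (abs_eq (by norm_num : (0:ℝ) ≤ 1)).mp h with h1 | h1
          · exact hzi.1 (by apply Complex.ext <;> simp [hre, h1])
          · exact hzi.2 (by apply Complex.ext <;> simp [hre, h1])
      have hzeq : z = Complex.I * (z.im : ℂ) := by
        apply Complex.ext <;> simp [hre]
      rw [hzeq]
      exact key_gamma u U hyp (abs_lt.mp him1)
    · -- free boundary point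
      have habs : ‖z‖ = 1 := hzσ.1
      have hrepos : 0 < z.re := by
        rcases lt_or_eq_of_le hzσ.2 with h | h
        · exact h
        · exfalso
          have hnsq : z.re^2 + z.im^2 = 1 := by
            have h2 : Complex.normSq z = 1 := by
              rw [← Complex.sq_norm, habs]; norm_num
            rw [Complex.normSq_apply] at h2
            nlinarith [h2]
          have h3 : (z.im - 1) * (z.im + 1) = 0 := by nlinarith
          rcases mul_eq_zero.mp h3 with h4 | h4
          · have h5 : z.im = 1 := by linarith
            exact hzi.1 (by apply Complex.ext <;> simp [← h, h5])
          · have h5 : z.im = -1 := by linarith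
            exact hzi.2 (by apply Complex.ext <;> simp [← h, h5])
      have hθ : |Complex.arg z| < Real.pi/2 :=
        Complex.abs_arg_lt_pi_div_two_iff.mpr (Or.inl hrepos)
      have hzeq : z = Complex.exp ((Complex.arg z : ℂ) * Complex.I) := by
        have h := Complex.norm_mul_exp_arg_mul_I z
        rw [habs] at h
        simpa using h.symm
      rw [hzeq]
      exact key_sigma u U hyp (abs_lt.mp hθ)


end
end

section
/- (Nitsche's theorem, conformal-parametrization form, used in the final step of the proof of Theorem 1.1.) Let u : ℂ → ℝ³ be smooth on an open neighborhood of the closed unit disk D̄ = {z ∈ ℂ : |z| ≤ 1}, with each component harmonic, conformal on D̄ (⟨u_x, u_y⟩ = 0, ‖u_x‖ = ‖u_y‖, and u_x ≠ 0 on D̄), and satisfying the free boundary conditions: for every z with |z| = 1, ‖u(z)‖ = 1 and the radial derivative (Re z)·u_x(z) + (Im z)·u_y(z) is a real scalar multiple of u(z). Then the image u(D̄) is an equatorial flat disk: there exists a unit vector n ∈ ℝ³ with ⟨n, u(z)⟩ = 0 for all z ∈ D̄. -/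
noncomputable section

open Complex

/-- CR: real-differentiable with complex-linear derivative is complex-differentiable. -/
lemma hasDerivAt_of_CR {f : ℂ → ℂ} {L : ℂ →L[ℝ] ℂ} {z : ℂ}
    (h : HasFDerivAt f L z) (hCR : L Complex.I = Complex.I * L 1) :
    HasDerivAt f (L 1) z := by
  set L' : ℂ →L[ℂ] ℂ := (ContinuousLinearMap.id ℂ ℂ).smulRight (L 1) with hL'
  have hkey : ∀ w : ℂ, L w = L' w := by
    intro w
    have hw : w = w.re • (1:ℂ) + w.im • Complex.I := by
      simp [Complex.real_smul, Complex.re_add_im]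
    have h1 : L w = w * L 1 := by
      conv_lhs => rw [hw]
      rw [map_add, map_smul, map_smul, hCR]
      conv_rhs => rw [hw]
      simp only [Complex.real_smul, smul_eq_mul]
      ring
    simp [hL', h1, smul_eq_mul, mul_comm]
  have h2 : HasFDerivAt f (L'.restrictScalars ℝ) z := by
    have heq : L = L'.restrictScalars ℝ := by
      ext w
      exact hkey w
    rwa [heq] at h
  have h3 : HasFDerivAt f L' z := .of_isLittleO h2.isLittleO
  have h4 : HasDerivAt f (L' 1) z := h3.hasDerivAt
  have hL1 : L' 1 = L 1 := by simp [hL']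
  rwa [hL1] at h4

/-- Complex gradient `v_x - i v_y` of a real function. -/
def Fc (v : ℂ → ℝ) (z : ℂ) : ℂ :=
  (fderiv ℝ v z 1 : ℂ) - (fderiv ℝ v z Complex.I : ℂ) * Complex.I

lemma clm_apply_decomp (L : ℂ →L[ℝ] ℝ) (w : ℂ) : L w = w.re * L 1 + w.im * L Complex.I := by
  have hw : w = w.re • (1:ℂ) + w.im • Complex.I := by
    simp [Complex.real_smul, Complex.re_add_im]
  conv_lhs => rw [hw]
  rw [map_add, map_smul, map_smul]
  simp [smul_eq_mul]

lemma Fc_differentiableAt {v : ℂ → ℝ} {U : Set ℂ} (hU : IsOpen U)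
    (hsm : ContDiffOn ℝ (⊤ : ℕ∞) v U)
    (hh : ∀ z ∈ U, lap v z = 0) {z : ℂ} (hz : z ∈ U) :
    DifferentiableAt ℂ (Fc v) z := by
  have hUz : U ∈ nhds z := hU.mem_nhds hz
  -- differentiability of fderiv
  have hC1 : ContDiffOn ℝ 1 (fderiv ℝ v) U := hsm.fderiv_of_isOpen hU (by exact WithTop.coe_le_coe.2 le_top)
  have hdf : DifferentiableAt ℝ (fderiv ℝ v) z :=
    (hC1.differentiableOn one_ne_zero).differentiableAt hUz
  set A := fderiv ℝ (fderiv ℝ v) z with hA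
  have hAd : HasFDerivAt (fderiv ℝ v) A z := hdf.hasFDerivAt
  -- symmetry of second derivative
  have hsymm : ∀ w₁ w₂, A w₁ w₂ = A w₂ w₁ := by
    intro w₁ w₂
    refine second_derivative_symmetric_of_eventually (f := v) ?_ hAd w₁ w₂
    filter_upwards [hUz] with y hy
    exact (((hsm.differentiableOn (by simp)).differentiableAt (hU.mem_nhds hy))).hasFDerivAt
  -- P and Q have fderivs
  have hP : HasFDerivAt (fun w => fderiv ℝ v w 1)
      ((ContinuousLinearMap.apply ℝ ℝ (1:ℂ)).comp A) z :=
    (ContinuousLinearMap.apply ℝ ℝ (1:ℂ)).hasFDerivAt.comp z hAd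
  have hQ : HasFDerivAt (fun w => fderiv ℝ v w Complex.I)
      ((ContinuousLinearMap.apply ℝ ℝ (Complex.I)).comp A) z :=
    (ContinuousLinearMap.apply ℝ ℝ (Complex.I)).hasFDerivAt.comp z hAd
  -- laplace equation
  have hlap : A 1 1 + A Complex.I Complex.I = 0 := by
    have := hh z hz
    unfold lap at this
    rwa [hP.fderiv, hQ.fderiv] at this
  -- build the fderiv of Fc
  have hPc : HasFDerivAt (fun w => ((fderiv ℝ v w 1 : ℝ) : ℂ))
      (Complex.ofRealCLM.comp ((ContinuousLinearMap.apply ℝ ℝ (1:ℂ)).comp A)) z :=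
    Complex.ofRealCLM.hasFDerivAt.comp z hP
  have hQc : HasFDerivAt (fun w => ((fderiv ℝ v w Complex.I : ℝ) : ℂ))
      (Complex.ofRealCLM.comp ((ContinuousLinearMap.apply ℝ ℝ (Complex.I)).comp A)) z :=
    Complex.ofRealCLM.hasFDerivAt.comp z hQ
  have hQcI := hQc.mul_const Complex.I
  have hF : HasFDerivAt (Fc v) _ z := hPc.sub hQcI
  have hd := hasDerivAt_of_CR hF ?_
  · exact hd.differentiableAt
  · simp only [ContinuousLinearMap.sub_apply, ContinuousLinearMap.smulRight_apply,
      ContinuousLinearMap.comp_apply, ContinuousLinearMap.apply_apply, Complex.ofRealCLM_apply,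
      ContinuousLinearMap.smul_apply, smul_eq_mul]
    rw [hsymm Complex.I 1]
    have h2 : A Complex.I Complex.I = - A 1 1 := by linarith [hlap]
    rw [h2]
    apply Complex.ext <;> simp [Complex.mul_re, Complex.mul_im] <;> ring


private lemma forall_fin3 {P : Fin 3 → Prop} (h0 : P 0) (h1 : P 1) (h2 : P 2) : ∀ k, P k := by
  intro k
  fin_cases k <;> assumption

/-- If the cross product of `a` and `x` vanishes and `a ≠ 0`, then `x` is a multiple of `a`. -/
lemma cross_zero_dep {a x : Fin 3 → ℂ} (ha : ∃ k, a k ≠ 0)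
    (h0 : a 1 * x 2 - a 2 * x 1 = 0) (h1 : a 2 * x 0 - a 0 * x 2 = 0)
    (h2 : a 0 * x 1 - a 1 * x 0 = 0) : ∃ μ : ℂ, ∀ k, x k = μ * a k := by
  have hcase : a 0 ≠ 0 ∨ a 1 ≠ 0 ∨ a 2 ≠ 0 := by
    obtain ⟨k, hk⟩ := ha
    fin_cases k
    · exact Or.inl hk
    · exact Or.inr (Or.inl hk)
    · exact Or.inr (Or.inr hk)
  rcases hcase with hk | hk | hk
  · refine ⟨x 0 / a 0, forall_fin3 ?_ ?_ ?_⟩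
    · field_simp
    · field_simp; linear_combination h2
    · field_simp; linear_combination -h1
  · refine ⟨x 1 / a 1, forall_fin3 ?_ ?_ ?_⟩
    · field_simp; linear_combination -h2
    · field_simp
    · field_simp; linear_combination h0
  · refine ⟨x 2 / a 2, forall_fin3 ?_ ?_ ?_⟩
    · field_simp; linear_combination h1
    · field_simp; linear_combination -h0
    · field_simp

/-- Two isotropic, mutually orthogonal vectors in `ℂ³` are dependent. -/
lemma isotropic_dep {a b : Fin 3 → ℂ}
    (haa : a 0 ^ 2 + a 1 ^ 2 + a 2 ^ 2 = 0)
    (hab : a 0 * b 0 + a 1 * b 1 + a 2 * b 2 = 0)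
    (hbb : b 0 ^ 2 + b 1 ^ 2 + b 2 ^ 2 = 0)
    (ha : ∃ k, a k ≠ 0) : ∃ μ : ℂ, ∀ k, b k = μ * a k := by
  set c : Fin 3 → ℂ := ![a 1 * b 2 - a 2 * b 1, a 2 * b 0 - a 0 * b 2, a 0 * b 1 - a 1 * b 0]
    with hc
  have hc0 : c 0 = a 1 * b 2 - a 2 * b 1 := rfl
  have hc1 : c 1 = a 2 * b 0 - a 0 * b 2 := rfl
  have hc2 : c 2 = a 0 * b 1 - a 1 * b 0 := rfl
  -- a × c = (a·b) a - (a·a) b = 0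
  obtain ⟨μ, hμ⟩ : ∃ μ : ℂ, ∀ k, c k = μ * a k := by
    apply cross_zero_dep ha
    · rw [hc1, hc2]; linear_combination a 0 * hab - b 0 * haa
    · rw [hc2, hc0]; linear_combination a 1 * hab - b 1 * haa
    · rw [hc0, hc1]; linear_combination a 2 * hab - b 2 * haa
  -- b × c = (b·b) a - (a·b) b = 0 pointwise, hence μ² a = 0, hence μ = 0
  have e0 : b 1 * c 2 - b 2 * c 1 = 0 := by
    rw [hc1, hc2]; linear_combination a 0 * hbb - b 0 * hab
  have e1 : b 2 * c 0 - b 0 * c 2 = 0 := by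
    rw [hc0, hc2]; linear_combination a 1 * hbb - b 1 * hab
  have e2 : b 0 * c 1 - b 1 * c 0 = 0 := by
    rw [hc0, hc1]; linear_combination a 2 * hbb - b 2 * hab
  have hμ2 : ∀ k, μ ^ 2 * a k = 0 := by
    refine forall_fin3 ?_ ?_ ?_
    · linear_combination (-μ) * hμ 0 + μ * hc0 - e0 + b 1 * hμ 2 - b 2 * hμ 1
    · linear_combination (-μ) * hμ 1 + μ * hc1 - e1 + b 2 * hμ 0 - b 0 * hμ 2
    · linear_combination (-μ) * hμ 2 + μ * hc2 - e2 + b 0 * hμ 1 - b 1 * hμ 0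
  have hμ0 : μ = 0 := by
    obtain ⟨k, hk⟩ := ha
    have := hμ2 k
    have h2 : μ ^ 2 = 0 := by
      rcases mul_eq_zero.1 this with h | h
      · exact h
      · exact absurd h hk
    exact pow_eq_zero_iff (n := 2) (by norm_num) |>.1 h2
  have hczero : ∀ k, c k = 0 := fun k => by rw [hμ k, hμ0, zero_mul]
  apply cross_zero_dep ha
  · have := hczero 0; rw [hc0] at this; exact this
  · have := hczero 1; rw [hc1] at this; exact this
  · have := hczero 2; rw [hc2] at this; exact this

lemma fderiv_dir_re (v : ℂ → ℝ) (z w : ℂ) : (w * Fc v z).re = fderiv ℝ v z w := by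
  rw [clm_apply_decomp (fderiv ℝ v z) w]
  simp only [Fc, Complex.mul_re, Complex.sub_re, Complex.sub_im, Complex.ofReal_re,
    Complex.ofReal_im, Complex.mul_im, Complex.I_re, Complex.I_im]
  ring

lemma eq_const_on_closure {E : Type*} [TopologicalSpace E] [T2Space E] {f : ℂ → E} {s : Set ℂ}
    {c : E} (hf : ContinuousOn f (closure s)) (h0 : ∀ y ∈ s, f y = c) {z : ℂ}
    (hz : z ∈ closure s) : f z = c := by
  haveI : (nhdsWithin z s).NeBot := mem_closure_iff_nhdsWithin_neBot.1 hz
  have h1 : Filter.Tendsto f (nhdsWithin z s) (nhds (f z)) :=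
    ((hf z hz).mono_left (nhdsWithin_mono z subset_closure))
  have h2 : Filter.Tendsto f (nhdsWithin z s) (nhds c) := by
    apply Filter.Tendsto.congr' ?_ tendsto_const_nhds
    filter_upwards [self_mem_nhdsWithin] with y hy
    exact (h0 y hy).symm
  exact tendsto_nhds_unique h1 h2

set_option maxHeartbeats 1000000 in
/-- **Nitsche's theorem (conformal-parametrization form).**
A smooth harmonic conformal immersion of the closed unit disk satisfying the
free boundary conditions in `𝔹³` has image an equatorial flat disk: there is a
unit vector `n` with `⟨n, u(z)⟩ = 0` on `D̄`. -/
theorem nitsche_free_boundary_disk (u : ℂ → Fin 3 → ℝ) (U : Set ℂ)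
    (hUo : IsOpen U) (hsub : Dbar ⊆ U)
    (hsm : ∀ k, ContDiffOn ℝ (⊤ : ℕ∞) (fun z => u z k) U)
    (hharm : ∀ k, ∀ z ∈ U, lap (fun w => u w k) z = 0)
    (hconf : ∀ z ∈ Dbar,
      (∑ k : Fin 3, vX u z k * vY u z k) = 0 ∧
      (∑ k : Fin 3, (vX u z k) ^ 2) = (∑ k : Fin 3, (vY u z k) ^ 2) ∧
      vX u z ≠ 0)
    (hfb : ∀ z : ℂ, ‖z‖ = 1 →
      (∑ k : Fin 3, (u z k) ^ 2) = 1 ∧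
      ∃ c : ℝ, ∀ k, z.re * vX u z k + z.im * vY u z k = c * u z k) :
    ∃ n : Fin 3 → ℝ, (∑ k : Fin 3, (n k) ^ 2) = 1 ∧
      ∀ z ∈ Dbar, (∑ k : Fin 3, n k * u z k) = 0 := by
  classical
  set v : Fin 3 → ℂ → ℝ := fun k z => u z k with hv
  set F : Fin 3 → ℂ → ℂ := fun k => Fc (v k) with hF
  have hFd : ∀ k, ∀ z ∈ U, DifferentiableAt ℂ (F k) z := by
    intro k z hz
    exact Fc_differentiableAt hUo (hsm k) (hharm k) hz
  have hDbar_eq : Dbar = Metric.closedBall (0:ℂ) 1 := by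
    ext z
    simp [Dbar, Metric.mem_closedBall, Complex.dist_eq]
  have hball : Metric.ball (0:ℂ) 1 ⊆ Dbar := by
    rw [hDbar_eq]; exact Metric.ball_subset_closedBall
  have h0D : (0:ℂ) ∈ Dbar := by simp [Dbar]
  have hFre : ∀ k z, (F k z).re = vX u z k := by
    intro k z; simp [hF, Fc, vX, hv]
  have hFim : ∀ k z, (F k z).im = -vY u z k := by
    intro k z; simp [hF, Fc, vY, hv]
  have hconf_sum : ∀ z ∈ Dbar, ∑ k : Fin 3, (F k z)^2 = 0 := by
    intro z hz
    obtain ⟨hc1, hc2, -⟩ := hconf z hz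
    have hre : ∀ k : Fin 3, ((F k z)^2).re = (vX u z k)^2 - (vY u z k)^2 := by
      intro k
      rw [pow_two, Complex.mul_re, hFre, hFim]
      ring
    have him : ∀ k : Fin 3, ((F k z)^2).im = -(2 * (vX u z k * vY u z k)) := by
      intro k
      rw [pow_two, Complex.mul_im, hFre, hFim]
      ring
    apply Complex.ext
    · rw [Complex.re_sum]
      simp only [hre, Complex.zero_re]
      rw [Finset.sum_sub_distrib, hc2, sub_self]
    · rw [Complex.im_sum]
      simp only [him, Complex.zero_im]
      have : ∑ x : Fin 3, -(2 * (vX u z x * vY u z x))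
          = -(2 * ∑ x : Fin 3, vX u z x * vY u z x) := by
        rw [Finset.mul_sum, ← Finset.sum_neg_distrib]
      rw [this, hc1]
      simp
  have hFne : ∀ z ∈ Dbar, ∃ k, F k z ≠ 0 := by
    intro z hz
    obtain ⟨k, hk⟩ := Function.ne_iff.1 (hconf z hz).2.2
    exact ⟨k, fun hc => hk (by rw [← hFre k z, hc]; simp)⟩
  have hFdiffOn : ∀ k, DifferentiableOn ℂ (F k) U := fun k z hz => (hFd k z hz).differentiableWithinAt
  have hFanal : ∀ k, AnalyticOnNhd ℂ (F k) U := fun k => (hFdiffOn k).analyticOnNhd hUo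
  have hF'anal : ∀ k, AnalyticOnNhd ℂ (deriv (F k)) U := fun k => (hFanal k).deriv
  set h : ℂ → ℂ := fun z => ∑ k : Fin 3, (deriv (F k) z)^2 with hh
  have hhdiff : DifferentiableOn ℂ h U := by
    apply DifferentiableOn.fun_sum
    intro k _
    exact ((hF'anal k).differentiableOn).pow 2
  have hdot : ∀ z ∈ Metric.ball (0:ℂ) 1, ∑ k : Fin 3, F k z * deriv (F k) z = 0 := by
    intro z hz
    have hDA : ∀ k : Fin 3, HasDerivAt (F k) (deriv (F k) z) z :=
      fun k => (hFd k z (hsub (hball hz))).hasDerivAt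
    have hsum : HasDerivAt (fun y => ∑ k : Fin 3, (F k y)^2)
        (∑ k : Fin 3, 2 * F k z * deriv (F k) z) z := by
      have := HasDerivAt.fun_sum (fun k (_ : k ∈ Finset.univ) => ((hDA k).pow 2))
      simpa using this
    have hEq : (fun y => ∑ k : Fin 3, (F k y)^2) =ᶠ[nhds z] fun _ => (0:ℂ) := by
      filter_upwards [Metric.isOpen_ball.mem_nhds hz] with y hy
      exact hconf_sum y (hball hy)
    have hz0 : HasDerivAt (fun y => ∑ k : Fin 3, (F k y)^2) 0 z :=
      (hasDerivAt_const z (0:ℂ)).congr_of_eventuallyEq hEq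
    have h2 : (∑ k : Fin 3, 2 * F k z * deriv (F k) z) = 0 := hsum.unique hz0
    have h3 : (2:ℂ) * ∑ k : Fin 3, F k z * deriv (F k) z = 0 := by
      rw [Finset.mul_sum]
      rw [← h2]
      congr 1
      ext k
      ring
    have := mul_eq_zero.1 h3
    simpa using this
  have hbnd : ∀ z : ℂ, ‖z‖ = 1 → (z^4 * h z).im = 0 := by
    set γ : ℝ → ℂ := fun θ => Complex.exp (θ * Complex.I) with hγdef
    have hγabs : ∀ θ, ‖γ θ‖ = 1 := by
      intro θ
      rw [hγdef]
      rw [Complex.norm_exp]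
      simp
    have hγD : ∀ θ, γ θ ∈ Dbar := fun θ => le_of_eq (hγabs θ)
    have hγU : ∀ θ, γ θ ∈ U := fun θ => hsub (hγD θ)
    have hγd : ∀ θ, HasDerivAt γ (Complex.I * γ θ) θ := by
      intro θ
      have h1 : HasDerivAt (fun s : ℝ => (s:ℂ) * Complex.I) Complex.I θ := by
        have h0 : HasDerivAt (fun s : ℝ => (s:ℂ)) 1 θ := by
          simpa using (hasDerivAt_id θ).ofReal_comp
        simpa using h0.mul_const Complex.I
      have := h1.cexp
      simpa [hγdef, mul_comm] using this
    set G : Fin 3 → ℝ → ℂ := fun k θ => γ θ * F k (γ θ) with hGdef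
    set DG : Fin 3 → ℝ → ℂ :=
      fun k θ => Complex.I * γ θ * (F k (γ θ) + γ θ * deriv (F k) (γ θ)) with hDGdef
    have hGd : ∀ k θ, HasDerivAt (G k) (DG k θ) θ := by
      intro k θ
      have hgk : HasDerivAt (fun z => z * F k z)
          (F k (γ θ) + γ θ * deriv (F k) (γ θ)) (γ θ) := by
        have h1 := (hFd k _ (hγU θ)).hasDerivAt
        have := (hasDerivAt_id (γ θ)).fun_mul h1
        simpa using this
      have hcomp := hgk.scomp θ (hγd θ)
      have heq : (Complex.I * γ θ) • (F k (γ θ) + γ θ * deriv (F k) (γ θ)) = DG k θ := by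
        rw [hDGdef, smul_eq_mul]
      rw [heq] at hcomp
      exact hcomp
    set Uc : Fin 3 → ℝ → ℝ := fun k θ => u (γ θ) k with hUcdef
    have hUud : ∀ k θ, HasDerivAt (Uc k) (-(G k θ).im) θ := by
      intro k θ
      have hd : DifferentiableAt ℝ (fun z => u z k) (γ θ) :=
        ((hsm k).differentiableOn (by simp)).differentiableAt (hUo.mem_nhds (hγU θ))
      have hcomp := hd.hasFDerivAt.comp_hasDerivAt θ (hγd θ)
      have hval : fderiv ℝ (fun z => u z k) (γ θ) (Complex.I * γ θ) = -(G k θ).im := by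
        rw [← fderiv_dir_re (fun z => u z k) (γ θ) (Complex.I * γ θ)]
        have : Complex.I * γ θ * Fc (fun z => u z k) (γ θ)
            = Complex.I * G k θ := by
          rw [hGdef]
          have : Fc (fun z => u z k) (γ θ) = F k (γ θ) := rfl
          rw [this]
          ring
        rw [this]
        simp [Complex.mul_re]
      rw [hval] at hcomp
      exact hcomp
    set c : ℝ → ℝ := fun θ => ∑ k : Fin 3, Uc k θ * (G k θ).re with hcdef
    have hUnorm : ∀ θ, ∑ k : Fin 3, (Uc k θ)^2 = 1 := by
      intro θ
      exact (hfb (γ θ) (hγabs θ)).1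
    have hGre : ∀ θ, ∀ k, (G k θ).re = c θ * Uc k θ := by
      intro θ
      obtain ⟨-, c', hc'⟩ := hfb (γ θ) (hγabs θ)
      have key : ∀ k, (G k θ).re = c' * Uc k θ := by
        intro k
        have h1 : (G k θ).re = fderiv ℝ (fun z => u z k) (γ θ) (γ θ) := by
          rw [hGdef]
          exact fderiv_dir_re (fun z => u z k) (γ θ) (γ θ)
        rw [h1, clm_apply_decomp]
        exact hc' k
      have hcc : c θ = c' := by
        rw [hcdef]
        simp only [key]
        have : ∑ k : Fin 3, Uc k θ * (c' * Uc k θ) = c' * ∑ k : Fin 3, (Uc k θ)^2 := by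
          rw [Finset.mul_sum]
          apply Finset.sum_congr rfl
          intro k _
          ring
        rw [this, hUnorm θ, mul_one]
      intro k
      rw [hcc]
      exact key k
    have hGG : ∀ θ, ∑ k : Fin 3, (G k θ)^2 = 0 := by
      intro θ
      have : ∑ k : Fin 3, (G k θ)^2 = (γ θ)^2 * ∑ k : Fin 3, (F k (γ θ))^2 := by
        rw [Finset.mul_sum]
        apply Finset.sum_congr rfl
        intro k _
        rw [hGdef]
        ring
      rw [this, hconf_sum (γ θ) (hγD θ), mul_zero]
    -- derivatives of Re/Im parts of G
    have hGred : ∀ k θ, HasDerivAt (fun θ => (G k θ).re) ((DG k θ).re) θ :=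
      fun k θ => Complex.reCLM.hasFDerivAt.comp_hasDerivAt θ (hGd k θ)
    have hGimd : ∀ k θ, HasDerivAt (fun θ => (G k θ).im) ((DG k θ).im) θ :=
      fun k θ => Complex.imCLM.hasFDerivAt.comp_hasDerivAt θ (hGd k θ)
    -- I1 : ∑ Uc * Im G = 0
    have hI1 : ∀ θ, ∑ k : Fin 3, Uc k θ * (G k θ).im = 0 := by
      intro θ
      have hld : HasDerivAt (fun θ => ∑ k : Fin 3, (Uc k θ)^2)
          (∑ k : Fin 3, 2 * Uc k θ * -(G k θ).im) θ := by
        apply HasDerivAt.fun_sum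
        intro k _
        have := (hUud k θ).fun_pow 2
        simpa using this
      have hconst : HasDerivAt (fun θ => ∑ k : Fin 3, (Uc k θ)^2) 0 θ := by
        have heq : (fun θ => ∑ k : Fin 3, (Uc k θ)^2) = fun _ => (1:ℝ) := by
          funext θ'
          exact hUnorm θ'
        rw [heq]
        exact hasDerivAt_const θ 1
      have := hld.unique hconst
      have h2 : ∑ k : Fin 3, 2 * Uc k θ * -(G k θ).im
          = -2 * ∑ k : Fin 3, Uc k θ * (G k θ).im := by
        rw [Finset.mul_sum]
        apply Finset.sum_congr rfl
        intro k _
        ring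
      rw [h2] at this
      linarith
    -- I2 : ∑ (Im G)² = c²
    have hI2 : ∀ θ, ∑ k : Fin 3, ((G k θ).im)^2 = (c θ)^2 := by
      intro θ
      have hre := congrArg Complex.re (hGG θ)
      rw [Complex.re_sum, Complex.zero_re] at hre
      have h1 : ∀ k : Fin 3, ((G k θ)^2).re = (c θ * Uc k θ)^2 - ((G k θ).im)^2 := by
        intro k
        rw [pow_two, Complex.mul_re, hGre θ k]
        ring
      simp only [h1] at hre
      rw [Finset.sum_sub_distrib] at hre
      have h2 : ∑ k : Fin 3, (c θ * Uc k θ)^2 = (c θ)^2 := by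
        have : ∑ k : Fin 3, (c θ * Uc k θ)^2 = (c θ)^2 * ∑ k : Fin 3, (Uc k θ)^2 := by
          rw [Finset.mul_sum]
          apply Finset.sum_congr rfl
          intro k _
          ring
        rw [this, hUnorm θ, mul_one]
      rw [h2] at hre
      linarith
    -- I3 : ∑ Uc * Im DG = c²
    have hI3 : ∀ θ, ∑ k : Fin 3, Uc k θ * (DG k θ).im = (c θ)^2 := by
      intro θ
      have hld : HasDerivAt (fun θ => ∑ k : Fin 3, Uc k θ * (G k θ).im)
          (∑ k : Fin 3, (-(G k θ).im * (G k θ).im + Uc k θ * (DG k θ).im)) θ := by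
        apply HasDerivAt.fun_sum
        intro k _
        exact (hUud k θ).mul (hGimd k θ)
      have hconst : HasDerivAt (fun θ => ∑ k : Fin 3, Uc k θ * (G k θ).im) 0 θ := by
        have heq : (fun θ => ∑ k : Fin 3, Uc k θ * (G k θ).im) = fun _ => (0:ℝ) := by
          funext θ'
          exact hI1 θ'
        rw [heq]
        exact hasDerivAt_const θ 0
      have huniq := hld.unique hconst
      rw [Finset.sum_add_distrib] at huniq
      have h2 : ∑ k : Fin 3, (-(G k θ).im * (G k θ).im) = -(c θ)^2 := by
        have : ∑ k : Fin 3, (-(G k θ).im * (G k θ).im)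
            = -∑ k : Fin 3, ((G k θ).im)^2 := by
          rw [← Finset.sum_neg_distrib]
          apply Finset.sum_congr rfl
          intro k _
          ring
        rw [this, hI2 θ]
      rw [h2] at huniq
      linarith
    -- derivative of c
    set cd : ℝ → ℝ :=
      fun θ => ∑ k : Fin 3, (-(G k θ).im * (G k θ).re + Uc k θ * (DG k θ).re) with hcddef
    have hcd : ∀ θ, HasDerivAt c (cd θ) θ := by
      intro θ
      apply HasDerivAt.fun_sum
      intro k _
      exact (hUud k θ).mul (hGred k θ)
    -- I4 : ∑ Im G * Im DG = c * cd
    have hI4 : ∀ θ, ∑ k : Fin 3, (G k θ).im * (DG k θ).im = c θ * cd θ := by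
      intro θ
      have hld : HasDerivAt (fun θ => ∑ k : Fin 3, ((G k θ).im)^2)
          (∑ k : Fin 3, 2 * (G k θ).im * (DG k θ).im) θ := by
        apply HasDerivAt.fun_sum
        intro k _
        have := (hGimd k θ).fun_pow 2
        simpa using this
      have hrd : HasDerivAt (fun θ => ∑ k : Fin 3, ((G k θ).im)^2)
          (2 * c θ * cd θ) θ := by
        have heq : (fun θ => ∑ k : Fin 3, ((G k θ).im)^2) = fun θ => (c θ)^2 := by
          funext θ'
          exact hI2 θ'
        rw [heq]
        have := (hcd θ).fun_pow 2
        simpa using this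
      have huniq := hld.unique hrd
      have h2 : ∑ k : Fin 3, 2 * (G k θ).im * (DG k θ).im
          = 2 * ∑ k : Fin 3, (G k θ).im * (DG k θ).im := by
        rw [Finset.mul_sum]
        apply Finset.sum_congr rfl
        intro k _
        ring
      rw [h2] at huniq
      linarith
    -- I5 : Re DG = cd * Uc - c * Im G
    have hI5 : ∀ θ k, (DG k θ).re = cd θ * Uc k θ + c θ * -(G k θ).im := by
      intro θ k
      have hld : HasDerivAt (fun θ => (G k θ).re) ((DG k θ).re) θ := hGred k θ
      have hrd : HasDerivAt (fun θ => (G k θ).re)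
          (cd θ * Uc k θ + c θ * -(G k θ).im) θ := by
        have heq : (fun θ => (G k θ).re) = fun θ => c θ * Uc k θ := by
          funext θ'
          exact hGre θ' k
        rw [heq]
        exact (hcd θ).mul (hUud k θ)
      exact hld.unique hrd
    -- I6 : ∑ G * DG = 0
    have hI6 : ∀ θ, ∑ k : Fin 3, G k θ * DG k θ = 0 := by
      intro θ
      have hld : HasDerivAt (fun θ => ∑ k : Fin 3, (G k θ)^2)
          (∑ k : Fin 3, 2 * G k θ * DG k θ) θ := by
        apply HasDerivAt.fun_sum
        intro k _
        have hmul := (hGd k θ).fun_mul (hGd k θ)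
        have heq2 : (fun θ => G k θ * G k θ) = fun θ => (G k θ)^2 := by
          funext x
          ring
        rw [heq2] at hmul
        have hval2 : DG k θ * G k θ + G k θ * DG k θ = 2 * G k θ * DG k θ := by ring
        rw [hval2] at hmul
        exact hmul
      have hconst : HasDerivAt (fun θ => ∑ k : Fin 3, (G k θ)^2) 0 θ := by
        have heq : (fun θ => ∑ k : Fin 3, (G k θ)^2) = fun _ => (0:ℂ) := by
          funext θ'
          exact hGG θ'
        rw [heq]
        exact hasDerivAt_const θ 0
      have huniq := hld.unique hconst
      have h2 : ∑ k : Fin 3, 2 * G k θ * DG k θ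
          = 2 * ∑ k : Fin 3, G k θ * DG k θ := by
        rw [Finset.mul_sum]
        apply Finset.sum_congr rfl
        intro k _
        ring
      rw [h2] at huniq
      have := mul_eq_zero.1 huniq
      rcases this with hcc | hgg
      · norm_num at hcc
      · exact hgg
    -- the main identity: γ⁴ h = -∑ DG²
    have hmain : ∀ θ, (γ θ)^4 * h (γ θ) = -∑ k : Fin 3, (DG k θ)^2 := by
      intro θ
      have hz2 : ∀ k : Fin 3, (γ θ)^2 * deriv (F k) (γ θ)
          = -(Complex.I * DG k θ) - G k θ := by
        intro k
        simp only [hDGdef, hGdef]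
        linear_combination (γ θ * (F k (γ θ) + γ θ * deriv (F k) (γ θ))) * Complex.I_sq
      have h1 : (γ θ)^4 * h (γ θ) = ∑ k : Fin 3, ((γ θ)^2 * deriv (F k) (γ θ))^2 := by
        simp only [hh]
        rw [Finset.mul_sum]
        apply Finset.sum_congr rfl
        intro k _
        ring
      rw [h1]
      have h2 : ∀ k : Fin 3, ((γ θ)^2 * deriv (F k) (γ θ))^2
          = -(DG k θ)^2 + 2 * Complex.I * (G k θ * DG k θ) + (G k θ)^2 := by
        intro k
        rw [hz2 k]
        linear_combination ((DG k θ)^2) * Complex.I_sq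
      simp only [h2]
      rw [Finset.sum_add_distrib, Finset.sum_add_distrib]
      have h3 : ∑ k : Fin 3, 2 * Complex.I * (G k θ * DG k θ)
          = 2 * Complex.I * ∑ k : Fin 3, G k θ * DG k θ := by
        rw [Finset.mul_sum]
      rw [h3, hI6 θ, hGG θ, Finset.sum_neg_distrib]
      ring
    -- conclude
    intro z hzabs
    obtain ⟨θ, hθ⟩ : ∃ θ : ℝ, γ θ = z := by
      refine ⟨Complex.arg z, ?_⟩
      rw [hγdef]
      have := Complex.norm_mul_exp_arg_mul_I z
      rw [hzabs] at this
      simpa using this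
    rw [← hθ, hmain θ]
    rw [Complex.neg_im, Complex.im_sum]
    have h4 : ∀ k : Fin 3, ((DG k θ)^2).im = 2 * ((DG k θ).re * (DG k θ).im) := by
      intro k
      rw [pow_two, Complex.mul_im]
      ring
    simp only [h4]
    have h5 : ∑ k : Fin 3, 2 * ((DG k θ).re * (DG k θ).im)
        = 2 * ∑ k : Fin 3, (DG k θ).re * (DG k θ).im := by
      rw [Finset.mul_sum]
    rw [h5]
    have h6 : ∑ k : Fin 3, (DG k θ).re * (DG k θ).im
        = cd θ * ∑ k : Fin 3, Uc k θ * (DG k θ).im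
          - c θ * ∑ k : Fin 3, (G k θ).im * (DG k θ).im := by
      rw [Finset.mul_sum, Finset.mul_sum, ← Finset.sum_sub_distrib]
      apply Finset.sum_congr rfl
      intro k _
      rw [hI5 θ k]
      ring
    rw [h6, hI3 θ, hI4 θ]
    ring
  have hzero : ∀ z ∈ Metric.ball (0:ℂ) 1, h z = 0 := by
    set ψ : ℂ → ℂ := fun y => y^4 * h y with hψ
    have hψdiff : DifferentiableOn ℂ ψ U :=
      ((differentiable_pow 4).differentiableOn).mul hhdiff
    have hclos : closure (Metric.ball (0:ℂ) 1) = Metric.closedBall 0 1 :=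
      closure_ball 0 one_ne_zero
    have hfront : frontier (Metric.ball (0:ℂ) 1) = Metric.sphere 0 1 :=
      frontier_ball 0 one_ne_zero
    have hψU : Metric.closedBall (0:ℂ) 1 ⊆ U := by rw [← hDbar_eq]; exact hsub
    have exp_le : ∀ t : ℂ, (t = Complex.I ∨ t = -Complex.I) →
        ∀ y ∈ Metric.closedBall (0:ℂ) 1, ‖Complex.exp (t * ψ y)‖ ≤ 1 := by
      intro t ht y hy
      apply Complex.norm_le_of_forall_mem_frontier_norm_le (f := fun y => Complex.exp (t * ψ y))
        (U := Metric.ball (0:ℂ) 1) Metric.isBounded_ball ?_ ?_ (hclos ▸ hy)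
      · apply DifferentiableOn.diffContOnCl
        rw [hclos]
        exact (((hψdiff.mono hψU).const_mul t).cexp)
      · intro x hx
        rw [hfront, Metric.mem_sphere, Complex.dist_eq, sub_zero] at hx
        have him := hbnd x hx
        have hre : (t * ψ x).re = 0 := by
          rcases ht with rfl | rfl <;>
            simp only [Complex.mul_re, Complex.I_re, Complex.I_im, Complex.neg_re,
              Complex.neg_im, hψ] <;>
          · rw [show (x^4 * h x).im = 0 from him]
            ring
        rw [Complex.norm_exp, hre, Real.exp_zero]
    have him0 : ∀ y ∈ Metric.closedBall (0:ℂ) 1, (ψ y).im = 0 := by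
      intro y hy
      have h1 := exp_le Complex.I (Or.inl rfl) y hy
      have h2 := exp_le (-Complex.I) (Or.inr rfl) y hy
      rw [Complex.norm_exp] at h1 h2
      have e1 : (Complex.I * ψ y).re = -(ψ y).im := by simp [Complex.mul_re]
      have e2 : ((-Complex.I) * ψ y).re = (ψ y).im := by simp [Complex.mul_re]
      rw [e1] at h1
      rw [e2] at h2
      have l1 : -(ψ y).im ≤ 0 := Real.exp_le_one_iff.1 h1
      have l2 : (ψ y).im ≤ 0 := Real.exp_le_one_iff.1 h2
      linarith
    -- the derivative of ψ vanishes on the open ball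
    have hderiv0 : ∀ x ∈ Metric.ball (0:ℂ) 1, deriv ψ x = 0 := by
      intro x hx
      have hψx : DifferentiableAt ℂ ψ x :=
        hψdiff.differentiableAt (hUo.mem_nhds (hsub (hball hx)))
      have hImψ : (fun y => (ψ y).im) =ᶠ[nhds x] fun _ => (0:ℝ) := by
        filter_upwards [Metric.isOpen_ball.mem_nhds hx] with y hy
        exact him0 y (Metric.ball_subset_closedBall hy)
      have h1 : HasFDerivAt (fun y => (ψ y).im)
          (Complex.imCLM.comp ((ContinuousLinearMap.smulRight (1 : ℂ →L[ℂ] ℂ)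
            (deriv ψ x)).restrictScalars ℝ)) x :=
        Complex.imCLM.hasFDerivAt.comp x (hψx.hasDerivAt.hasFDerivAt.restrictScalars ℝ)
      have h2 : HasFDerivAt (fun y => (ψ y).im) (0 : ℂ →L[ℝ] ℝ) x :=
        (hasFDerivAt_const (0:ℝ) x).congr_of_eventuallyEq hImψ
      have heq := h1.unique h2
      have k1 : (deriv ψ x).im = 0 := by
        have := congrArg (fun (L : ℂ →L[ℝ] ℝ) => L 1) heq
        simpa using this
      have k2 : (deriv ψ x).re = 0 := by
        have := congrArg (fun (L : ℂ →L[ℝ] ℝ) => L Complex.I) heq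
        simp only [ContinuousLinearMap.comp_apply, ContinuousLinearMap.coe_restrictScalars',
          ContinuousLinearMap.smulRight_apply, ContinuousLinearMap.one_apply,
          Complex.imCLM_apply, ContinuousLinearMap.zero_apply, smul_eq_mul,
          Complex.mul_im, Complex.I_re, Complex.I_im] at this
        linarith [this]
      exact Complex.ext k2 k1
    have hconst : ∀ x ∈ Metric.ball (0:ℂ) 1, ψ x = ψ 0 := by
      intro x hx
      have hψball : DifferentiableOn ℂ ψ (Metric.ball (0:ℂ) 1) :=
        hψdiff.mono (fun y hy => hsub (hball hy))
      apply (convex_ball (0:ℂ) 1).is_const_of_fderivWithin_eq_zero hψball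
      · intro y hy
        rw [fderivWithin_of_isOpen Metric.isOpen_ball hy]
        have hψy : DifferentiableAt ℂ ψ y :=
          hψdiff.differentiableAt (hUo.mem_nhds (hsub (hball hy)))
        have : HasDerivAt ψ 0 y := by
          have := hψy.hasDerivAt
          rwa [hderiv0 y hy] at this
        rw [this.hasFDerivAt.fderiv]
        ext w
        simp
      · exact hx
      · exact Metric.mem_ball_self one_pos
    have hψ00 : ψ 0 = 0 := by simp [hψ]
    -- conclude h = 0 on the ball
    have hzero' : ∀ y ∈ Metric.ball (0:ℂ) 1, y ≠ 0 → h y = 0 := by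
      intro y hy hyne
      have : ψ y = 0 := by rw [hconst y hy, hψ00]
      rw [hψ] at this
      simp only [mul_eq_zero] at this
      rcases this with hc | hc
      · exact absurd hc (pow_ne_zero 4 hyne)
      · exact hc
    intro z hz
    by_cases hz0 : z = 0
    · subst hz0
      have hcont : ContinuousAt h 0 :=
        (hhdiff.differentiableAt (hUo.mem_nhds (hsub h0D))).continuousAt
      have ht1 : Filter.Tendsto h (nhdsWithin (0:ℂ) {(0:ℂ)}ᶜ) (nhds (h 0)) :=
        hcont.continuousWithinAt.tendsto
      have ht2 : Filter.Tendsto h (nhdsWithin (0:ℂ) {(0:ℂ)}ᶜ) (nhds 0) := by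
        apply Filter.Tendsto.congr' ?_ tendsto_const_nhds
        have hmem : (Metric.ball (0:ℂ) 1 \ {0}) ∈ nhdsWithin (0:ℂ) {(0:ℂ)}ᶜ := by
          rw [Set.diff_eq]
          exact Filter.inter_mem
            (mem_nhdsWithin_of_mem_nhds (Metric.isOpen_ball.mem_nhds (Metric.mem_ball_self one_pos)))
            self_mem_nhdsWithin
        filter_upwards [hmem] with y hy
        exact (hzero' y hy.1 hy.2).symm
      exact tendsto_nhds_unique ht1 ht2
    · exact hzero' z hz hz0
  -- pointwise proportionality
  set lam : ℂ → ℂ := fun z =>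
    (∑ k : Fin 3, deriv (F k) z * (starRingEnd ℂ) (F k z)) /
      (∑ k : Fin 3, (Complex.normSq (F k z) : ℂ)) with hlamdef
  have hdenom : ∀ z ∈ Dbar, (∑ k : Fin 3, (Complex.normSq (F k z) : ℂ)) ≠ 0 := by
    intro z hz
    obtain ⟨k, hk⟩ := hFne z hz
    rw [← Complex.ofReal_sum]
    rw [Complex.ofReal_ne_zero]
    have hpos : 0 < ∑ k : Fin 3, Complex.normSq (F k z) := by
      apply Finset.sum_pos' (fun i _ => Complex.normSq_nonneg _)
      exact ⟨k, Finset.mem_univ k, Complex.normSq_pos.2 hk⟩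
    exact ne_of_gt hpos
  have hlam : ∀ z ∈ Metric.ball (0:ℂ) 1, ∀ k, deriv (F k) z = lam z * F k z := by
    intro z hz
    have hzD : z ∈ Dbar := hball hz
    obtain ⟨μ, hμ⟩ : ∃ μ : ℂ, ∀ k, deriv (F k) z = μ * F k z := by
      apply isotropic_dep (a := fun k => F k z) (b := fun k => deriv (F k) z)
      · have := hconf_sum z hzD
        rw [Fin.sum_univ_three] at this
        exact this
      · have := hdot z hz
        rw [Fin.sum_univ_three] at this
        exact this
      · have := hzero z hz
        simp only [hh] at this
        rw [Fin.sum_univ_three] at this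
        exact this
      · exact hFne z hzD
    have hlamval : lam z = μ := by
      simp only [hlamdef]
      have hnum : (∑ k : Fin 3, deriv (F k) z * (starRingEnd ℂ) (F k z))
          = μ * ∑ k : Fin 3, (Complex.normSq (F k z) : ℂ) := by
        rw [Finset.mul_sum]
        apply Finset.sum_congr rfl
        intro k _
        rw [hμ k, mul_assoc, Complex.mul_conj]
      rw [hnum, mul_div_assoc, div_self (hdenom z hzD), mul_one]
    intro k
    rw [hlamval]
    exact hμ k
  have hlamcont : ContinuousOn lam (Metric.ball (0:ℂ) 1) := by
    apply ContinuousOn.div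
    · apply continuousOn_finset_sum
      intro k _
      exact (((hF'anal k).continuousOn).mono (fun x hx => hsub (hball hx))).mul
        ((Complex.continuous_conj.comp_continuousOn
          (((hFanal k).continuousOn).mono (fun x hx => hsub (hball hx)))))
    · apply continuousOn_finset_sum
      intro k _
      exact Complex.continuous_ofReal.comp_continuousOn
        (Complex.continuous_normSq.comp_continuousOn
          (((hFanal k).continuousOn).mono (fun x hx => hsub (hball hx))))
    · intro z hz
      exact hdenom z (hball hz)
  -- the normal vector
  set a : Fin 3 → ℝ := vX u 0 with ha
  set b : Fin 3 → ℝ := vY u 0 with hb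
  set cr : Fin 3 → ℝ := ![a 1 * b 2 - a 2 * b 1, a 2 * b 0 - a 0 * b 2, a 0 * b 1 - a 1 * b 0]
    with hcr
  set s : ℝ := ∑ k : Fin 3, (cr k)^2 with hs
  have hcr0 : cr 0 = a 1 * b 2 - a 2 * b 1 := rfl
  have hcr1 : cr 1 = a 2 * b 0 - a 0 * b 2 := rfl
  have hcr2 : cr 2 = a 0 * b 1 - a 1 * b 0 := rfl
  have hs_eq : s = (∑ k : Fin 3, (a k)^2)^2 := by
    obtain ⟨hc1, hc2, -⟩ := hconf 0 h0D
    rw [← ha, ← hb] at hc1 hc2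
    simp only [Fin.sum_univ_three] at hc1 hc2
    rw [hs]
    simp only [Fin.sum_univ_three, hcr0, hcr1, hcr2]
    linear_combination (-(a 0^2 + a 1^2 + a 2^2)) * hc2
      + (-(a 0 * b 0 + a 1 * b 1 + a 2 * b 2)) * hc1
  have hspos : 0 < s := by
    rw [hs_eq]
    have hane : ∃ k, a k ≠ 0 := by
      obtain ⟨k, hk⟩ := Function.ne_iff.1 (hconf 0 h0D).2.2
      exact ⟨k, hk⟩
    obtain ⟨k, hk⟩ := hane
    have : 0 < ∑ k : Fin 3, (a k)^2 := by
      apply Finset.sum_pos' (fun i _ => sq_nonneg _)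
      exact ⟨k, Finset.mem_univ k, by positivity⟩
    positivity
  set r : ℝ := Real.sqrt s with hr
  have hrpos : 0 < r := Real.sqrt_pos.2 hspos
  set n : Fin 3 → ℝ := fun k => cr k / r with hn
  have hr2 : r^2 = s := Real.sq_sqrt hspos.le
  have hn1 : ∑ k : Fin 3, (n k)^2 = 1 := by
    simp only [hn, div_pow]
    rw [← Finset.sum_div, ← hs, hr2, div_self (ne_of_gt hspos)]
  have hna : ∑ k : Fin 3, n k * a k = 0 := by
    simp only [hn, div_mul_eq_mul_div]
    rw [← Finset.sum_div, Fin.sum_univ_three, hcr0, hcr1, hcr2]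
    have : (a 1 * b 2 - a 2 * b 1) * a 0 + (a 2 * b 0 - a 0 * b 2) * a 1
        + (a 0 * b 1 - a 1 * b 0) * a 2 = 0 := by ring
    rw [this, zero_div]
  have hnb : ∑ k : Fin 3, n k * b k = 0 := by
    simp only [hn, div_mul_eq_mul_div]
    rw [← Finset.sum_div, Fin.sum_univ_three, hcr0, hcr1, hcr2]
    have : (a 1 * b 2 - a 2 * b 1) * b 0 + (a 2 * b 0 - a 0 * b 2) * b 1
        + (a 0 * b 1 - a 1 * b 0) * b 2 = 0 := by ring
    rw [this, zero_div]
  set w : ℂ → ℂ := fun z => ∑ k : Fin 3, (n k : ℂ) * F k z with hw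
  have hw0 : w 0 = 0 := by
    simp only [hw]
    apply Complex.ext
    · rw [Complex.re_sum, Complex.zero_re]
      have : ∀ k : Fin 3, ((n k : ℂ) * F k 0).re = n k * a k := by
        intro k
        rw [Complex.re_ofReal_mul, hFre, ha]
      simp only [this]
      exact hna
    · rw [Complex.im_sum, Complex.zero_im]
      have : ∀ k : Fin 3, ((n k : ℂ) * F k 0).im = -(n k * b k) := by
        intro k
        rw [Complex.im_ofReal_mul, hFim, hb]
        ring
      simp only [this]
      rw [Finset.sum_neg_distrib, hnb, neg_zero]
  have hwdiffOn : DifferentiableOn ℂ w U := by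
    apply DifferentiableOn.fun_sum
    intro k _
    exact (hFdiffOn k).const_mul _
  have hwz : ∀ z ∈ Metric.ball (0:ℂ) 1, w z = 0 := by
    intro z hz
    have hseg : ∀ t : ℝ, t ∈ Set.Icc (0:ℝ) 1 → (t:ℂ) * z ∈ Metric.ball (0:ℂ) 1 := by
      intro t ht
      rw [Metric.mem_ball, dist_zero_right] at hz ⊢
      calc ‖(t:ℂ) * z‖ = |t| * ‖z‖ := by rw [norm_mul, Complex.norm_real, Real.norm_eq_abs]
        _ ≤ 1 * ‖z‖ := by
            apply mul_le_mul_of_nonneg_right _ (norm_nonneg z)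
            rw [abs_le]
            exact ⟨by linarith [ht.1], ht.2⟩
        _ = ‖z‖ := one_mul _
        _ < 1 := hz
    set S : Set ℂ := (fun t : ℝ => (t:ℂ) * z) '' Set.Icc 0 1 with hS
    have hScomp : IsCompact S := isCompact_Icc.image (Complex.continuous_ofReal.mul continuous_const)
    have hSball : S ⊆ Metric.ball (0:ℂ) 1 := by
      rintro y ⟨t, ht, rfl⟩
      exact hseg t ht
    obtain ⟨K, hK⟩ := hScomp.exists_bound_of_continuousOn
      ((hlamcont.mono hSball))
    have hwd : ∀ y ∈ Metric.ball (0:ℂ) 1, HasDerivAt w (lam y * w y) y := by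
      intro y hy
      have hsum : HasDerivAt w (∑ k : Fin 3, (n k : ℂ) * deriv (F k) y) y := by
        apply HasDerivAt.fun_sum
        intro k _
        exact ((hFd k y (hsub (hball hy))).hasDerivAt.const_mul _)
      convert hsum using 1
      rw [hw, Finset.mul_sum]
      apply Finset.sum_congr rfl
      intro k _
      rw [hlam y hy k]
      ring
    set f : ℝ → ℂ := fun t => w ((t:ℂ) * z) with hf
    have hγ : ∀ t : ℝ, HasDerivAt (fun s : ℝ => (s:ℂ) * z) z t := by
      intro t
      have h1 : HasDerivAt (fun s : ℝ => (s:ℂ)) 1 t := by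
        simpa using (hasDerivAt_id t).ofReal_comp
      simpa using h1.mul_const z
    have hft : ∀ t ∈ Set.Icc (0:ℝ) 1,
        HasDerivAt f (z * (lam ((t:ℂ)*z) * w ((t:ℂ)*z))) t := by
      intro t ht
      have := (hwd _ (hseg t ht)).scomp t (hγ t)
      simpa [hf, smul_eq_mul, mul_comm, Function.comp_def] using this
    have hbound : ∀ t ∈ Set.Ico (0:ℝ) 1,
        ‖z * (lam ((t:ℂ)*z) * w ((t:ℂ)*z))‖ ≤ (‖z‖ * K) * ‖f t‖ + 0 := by
      intro t ht
      have htIcc : t ∈ Set.Icc (0:ℝ) 1 := ⟨ht.1, ht.2.le⟩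
      have hmem : (t:ℂ)*z ∈ S := ⟨t, htIcc, rfl⟩
      have hKt := hK _ hmem
      rw [add_zero, norm_mul, norm_mul]
      calc ‖z‖ * (‖lam ((t:ℂ)*z)‖ * ‖w ((t:ℂ)*z)‖)
          ≤ ‖z‖ * (K * ‖w ((t:ℂ)*z)‖) := by
            apply mul_le_mul_of_nonneg_left _ (norm_nonneg z)
            exact mul_le_mul_of_nonneg_right hKt (norm_nonneg _)
        _ = (‖z‖ * K) * ‖f t‖ := by rw [hf]; ring
    have hcontf : ContinuousOn f (Set.Icc (0:ℝ) 1) := by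
      intro t ht
      exact (hft t ht).continuousAt.continuousWithinAt
    have ha0 : ‖f 0‖ ≤ 0 := by
      have : f 0 = 0 := by
        rw [hf]
        simp only [Complex.ofReal_zero, zero_mul]
        exact hw0
      rw [this, norm_zero]
    have := norm_le_gronwallBound_of_norm_deriv_right_le hcontf
      (fun t ht => (hft t (Set.mem_Icc_of_Ico ht)).hasDerivWithinAt) ha0 hbound
      1 (by norm_num)
    rw [gronwallBound_ε0_δ0] at this
    have hf1 : f 1 = w z := by rw [hf]; simp
    rw [hf1] at this
    exact norm_le_zero_iff.1 this
  refine ⟨n, hn1, ?_⟩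
  -- extend w = 0 to the closed disk by continuity
  have hDcl : Dbar = closure (Metric.ball (0:ℂ) 1) := by
    rw [closure_ball (0:ℂ) one_ne_zero, hDbar_eq]
  have hwcont : ContinuousOn w (closure (Metric.ball (0:ℂ) 1)) := by
    rw [← hDcl]
    exact hwdiffOn.continuousOn.mono hsub
  have hwDbar : ∀ z ∈ Dbar, w z = 0 := by
    intro z hz
    exact eq_const_on_closure hwcont (fun y hy => hwz y hy) (hDcl ▸ hz)
  -- the linear function g = ⟨n, u⟩
  set g : ℂ → ℝ := fun z => ∑ k : Fin 3, n k * u z k with hg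
  have hgd : ∀ y ∈ U, HasFDerivAt g
      (∑ k : Fin 3, n k • fderiv ℝ (fun w => u w k) y) y := by
    intro y hy
    apply HasFDerivAt.fun_sum
    intro k _
    exact (((hsm k).differentiableOn (by simp)).differentiableAt
      (hUo.mem_nhds hy)).hasFDerivAt.const_mul (n k)
  have hgfd0 : ∀ y ∈ Metric.ball (0:ℂ) 1,
      (∑ k : Fin 3, n k • fderiv ℝ (fun w => u w k) y) = 0 := by
    intro y hy
    have hwy : w y = 0 := hwz y hy
    have hre : ∑ k : Fin 3, n k * vX u y k = 0 := by
      have := congrArg Complex.re hwy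
      rw [hw] at this
      rw [Complex.re_sum] at this
      simp only [Complex.re_ofReal_mul, hFre] at this
      simpa using this
    have him : ∑ k : Fin 3, n k * vY u y k = 0 := by
      have := congrArg Complex.im hwy
      rw [hw] at this
      rw [Complex.im_sum] at this
      simp only [Complex.im_ofReal_mul, hFim] at this
      have h2 : ∑ x : Fin 3, n x * -vY u y x = 0 := by simpa using this
      have h3 : ∑ x : Fin 3, n x * -vY u y x = -∑ x : Fin 3, n x * vY u y x := by
        rw [← Finset.sum_neg_distrib]
        apply Finset.sum_congr rfl
        intro k _
        ring
      rw [h3] at h2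
      linarith [h2]
    ext ζ
    rw [ContinuousLinearMap.zero_apply]
    rw [clm_apply_decomp]
    have e1 : (∑ k : Fin 3, n k • fderiv ℝ (fun w => u w k) y) 1
        = ∑ k : Fin 3, n k * vX u y k := by
      rw [ContinuousLinearMap.sum_apply]
      apply Finset.sum_congr rfl
      intro k _
      rw [ContinuousLinearMap.smul_apply, smul_eq_mul]
      rfl
    have e2 : (∑ k : Fin 3, n k • fderiv ℝ (fun w => u w k) y) Complex.I
        = ∑ k : Fin 3, n k * vY u y k := by
      rw [ContinuousLinearMap.sum_apply]
      apply Finset.sum_congr rfl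
      intro k _
      rw [ContinuousLinearMap.smul_apply, smul_eq_mul]
      rfl
    rw [e1, e2, hre, him]
    ring
  have hgdiffOn : DifferentiableOn ℝ g (Metric.ball (0:ℂ) 1) := by
    intro y hy
    exact (hgd y (hsub (hball hy))).differentiableAt.differentiableWithinAt
  have hgconst : ∀ x ∈ Metric.ball (0:ℂ) 1, g x = g 0 := by
    intro x hx
    apply (convex_ball (0:ℂ) 1).is_const_of_fderivWithin_eq_zero hgdiffOn
    · intro y hy
      rw [fderivWithin_of_isOpen Metric.isOpen_ball hy]
      rw [(hgd y (hsub (hball hy))).fderiv]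
      exact hgfd0 y hy
    · exact hx
    · exact Metric.mem_ball_self one_pos
  have hgcont : ContinuousOn g (closure (Metric.ball (0:ℂ) 1)) := by
    rw [← hDcl]
    apply ContinuousOn.mono _ hsub
    apply continuousOn_finset_sum
    intro k _
    exact ((hsm k).continuousOn).const_smul (n k) |>.congr (fun x _ => rfl)
  have hgDbar : ∀ z ∈ Dbar, g z = g 0 := by
    intro z hz
    exact eq_const_on_closure hgcont (fun y hy => hgconst y hy) (hDcl ▸ hz)
  -- evaluate at z = 1 to show g 0 = 0
  have h1D : (1:ℂ) ∈ Dbar := by simp [Dbar]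
  obtain ⟨-, c, hc⟩ := hfb 1 (by simp)
  have hc' : ∀ k, vX u 1 k = c * u 1 k := by
    intro k
    have := hc k
    simpa using this
  have hcne : c ≠ 0 := by
    intro hc0
    apply (hconf 1 h1D).2.2
    funext k
    rw [hc' k, hc0, zero_mul]
    rfl
  have hw1 : w 1 = 0 := hwDbar 1 h1D
  have hrew1 : ∑ k : Fin 3, n k * vX u 1 k = 0 := by
    have := congrArg Complex.re hw1
    rw [hw] at this
    rw [Complex.re_sum] at this
    simp only [Complex.re_ofReal_mul, hFre] at this
    simpa using this
  have hg1 : c * g 1 = 0 := by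
    rw [hg, Finset.mul_sum]
    rw [← hrew1]
    apply Finset.sum_congr rfl
    intro k _
    rw [hc' k]
    ring
  have hg0 : g 0 = 0 := by
    have := hgDbar 1 h1D
    have hg1' : g 1 = 0 := by
      rcases mul_eq_zero.1 hg1 with hcc | hgg
      · exact absurd hcc hcne
      · exact hgg
    rw [← this, hg1']
  intro z hz
  have := hgDbar z hz
  rw [hg0] at this
  exact this

end
end

section
/- Let Ω ⊆ ℂ be open and u : Ω → ℝ³ be C² and conformal: ⟨u_x, u_y⟩ = 0 and ‖u_x‖ = ‖u_y‖ > 0 at every point of Ω. Fix z₀ ∈ Ω, set w = u_{zz}(z₀) ∈ ℂ³ where ∂_z = (1/2)(∂_x − i∂_y), let e₁ = u_x(z₀)/‖u_x(z₀)‖, e₂ = u_y(z₀)/‖u_y(z₀)‖, and define the normal part w^⊥ = w − (w·e₁) e₁ − (w·e₂) e₂, where v·w denotes the complex-bilinear dot product Σ_k v_k w_k on ℂ³ (extending the real inner product). Then w^⊥ · w^⊥ = w · w. -/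
noncomputable section

lemma ofReal_fderiv' {h : ℂ → ℝ} {z : ℂ} (hd : DifferentiableAt ℝ h z) (v : ℂ) :
    fderiv ℝ (fun w => ((h w : ℝ) : ℂ)) z v = ((fderiv ℝ h z v : ℝ) : ℂ) := by
  have : fderiv ℝ (fun w => ((h w : ℝ) : ℂ)) z =
      Complex.ofRealCLM.comp (fderiv ℝ h z) :=
    (Complex.ofRealCLM.hasFDerivAt.comp z hd.hasFDerivAt).fderiv
  rw [this]; rfl

lemma gval' {u : ℂ → Fin 3 → ℝ} {z : ℂ} {k : Fin 3}
    (hd : DifferentiableAt ℝ (fun w => u w k) z) :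
    dzC (fun w' => ((u w' k : ℝ) : ℂ)) z
      = (1/2) * ((vX u z k : ℂ) - Complex.I * (vY u z k : ℂ)) := by
  rw [dzC, ofReal_fderiv' hd, ofReal_fderiv' hd]; rfl

lemma gdiff' {u : ℂ → Fin 3 → ℝ} {z : ℂ} {k : Fin 3}
    (h2 : ContDiffAt ℝ 2 (fun w => u w k) z) :
    DifferentiableAt ℝ (fun w => dzC (fun w' => ((u w' k : ℝ) : ℂ)) w) z := by
  have hC : ContDiffAt ℝ 2 (fun w => ((u w k : ℝ) : ℂ)) z :=
    Complex.ofRealCLM.contDiff.contDiffAt.comp z h2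
  have hF : ContDiffAt ℝ 1 (fderiv ℝ (fun w => ((u w k : ℝ) : ℂ))) z :=
    hC.fderiv_right (by norm_num)
  have hd := hF.differentiableAt one_ne_zero
  have h1 : DifferentiableAt ℝ (fun w => fderiv ℝ (fun w' => ((u w' k : ℝ) : ℂ)) w 1) z :=
    hd.clm_apply (differentiableAt_const _)
  have hI : DifferentiableAt ℝ (fun w => fderiv ℝ (fun w' => ((u w' k : ℝ) : ℂ)) w Complex.I) z :=
    hd.clm_apply (differentiableAt_const _)
  exact (differentiableAt_const _).mul (h1.sub ((differentiableAt_const _).mul hI))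

lemma perp_alg (w E1 E2 : Fin 3 → ℂ)
    (h1 : (∑ k : Fin 3, (E1 k)^2) = 1) (h2 : (∑ k : Fin 3, (E2 k)^2) = 1)
    (h12 : (∑ k : Fin 3, E1 k * E2 k) = 0)
    (hAB : (∑ m : Fin 3, w m * E1 m)^2 + (∑ m : Fin 3, w m * E2 m)^2 = 0) :
    (∑ k : Fin 3, (w k - (∑ m : Fin 3, w m * E1 m) * E1 k
        - (∑ m : Fin 3, w m * E2 m) * E2 k)^2) = ∑ k : Fin 3, (w k)^2 := by
  simp only [Fin.sum_univ_three] at *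
  linear_combination (w 0 * E1 0 + w 1 * E1 1 + w 2 * E1 2)^2 * h1
    + (w 0 * E2 0 + w 1 * E2 1 + w 2 * E2 2)^2 * h2
    + 2 * (w 0 * E1 0 + w 1 * E1 1 + w 2 * E1 2) * (w 0 * E2 0 + w 1 * E2 1 + w 2 * E2 2) * h12
    - hAB

/-- For a conformal `C²` immersion, the normal part of `u_{zz}` satisfies
`u_{zz}^⊥ · u_{zz}^⊥ = u_{zz} · u_{zz}` (complex-bilinear dot product). -/
theorem uzz_perp_dot_eq (Ω : Set ℂ) (hΩ : IsOpen Ω) (u : ℂ → Fin 3 → ℝ)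
    (hsm : ∀ k, ContDiffOn ℝ 2 (fun z => u z k) Ω)
    (hconf : ∀ z ∈ Ω,
      (∑ k : Fin 3, vX u z k * vY u z k) = 0 ∧
      (∑ k : Fin 3, (vX u z k) ^ 2) = (∑ k : Fin 3, (vY u z k) ^ 2) ∧
      0 < ∑ k : Fin 3, (vX u z k) ^ 2)
    (z₀ : ℂ) (hz₀ : z₀ ∈ Ω) :
    let w : Fin 3 → ℂ := uzz u z₀
    let e₁ : Fin 3 → ℝ := fun k => vX u z₀ k / Real.sqrt (∑ m : Fin 3, (vX u z₀ m) ^ 2)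
    let e₂ : Fin 3 → ℝ := fun k => vY u z₀ k / Real.sqrt (∑ m : Fin 3, (vY u z₀ m) ^ 2)
    let wperp : Fin 3 → ℂ := fun k =>
      w k - (∑ m : Fin 3, w m * (e₁ m : ℂ)) * (e₁ k : ℂ)
          - (∑ m : Fin 3, w m * (e₂ m : ℂ)) * (e₂ k : ℂ)
    (∑ k : Fin 3, (wperp k) ^ 2) = ∑ k : Fin 3, (w k) ^ 2 := by
  intro w e₁ e₂ wperp
  set g : Fin 3 → ℂ → ℂ := fun k w => dzC (fun w' => ((u w' k : ℝ) : ℂ)) w with hg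
  -- basic smoothness facts
  have hct : ∀ k, ∀ z ∈ Ω, ContDiffAt ℝ 2 (fun w => u w k) z := fun k z hz =>
    (hsm k).contDiffAt (hΩ.mem_nhds hz)
  have hdiff : ∀ k, ∀ z ∈ Ω, DifferentiableAt ℝ (fun w => u w k) z := fun k z hz =>
    ((hct k z hz).differentiableAt (by norm_num))
  -- conformality rewritten: sum of g k ^2 vanishes on Ω
  have hS : ∀ z ∈ Ω, (∑ k : Fin 3, (g k z) ^ 2) = 0 := by
    intro z hz
    obtain ⟨h1, h2, _⟩ := hconf z hz
    have hgz : ∀ k, (g k z) ^ 2 = (1/4 : ℂ) * ((vX u z k : ℂ)^2 - (vY u z k : ℂ)^2)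
        - (1/2) * Complex.I * ((vX u z k : ℂ) * (vY u z k : ℂ)) := by
      intro k
      have hgk : g k z = (1/2) * ((vX u z k : ℂ) - Complex.I * (vY u z k : ℂ)) :=
        gval' (hdiff k z hz)
      rw [hgk]
      have hI2 : (Complex.I)^2 = -1 := Complex.I_sq
      ring_nf
      rw [hI2]; ring
    calc (∑ k : Fin 3, (g k z) ^ 2)
        = (1/4 : ℂ) * ((∑ k : Fin 3, ((vX u z k : ℝ):ℂ)^2) - (∑ k : Fin 3, ((vY u z k : ℝ):ℂ)^2))
          - (1/2) * Complex.I * (∑ k : Fin 3, ((vX u z k : ℝ):ℂ) * ((vY u z k : ℝ):ℂ)) := by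
          simp only [hgz, Fin.sum_univ_three]; ring
      _ = 0 := by
          have e2 : (∑ k : Fin 3, ((vX u z k : ℝ):ℂ)^2) = (∑ k : Fin 3, ((vY u z k : ℝ):ℂ)^2) := by
            exact_mod_cast congrArg (Complex.ofReal) h2
          have e1 : (∑ k : Fin 3, ((vX u z k : ℝ):ℂ) * ((vY u z k : ℝ):ℂ)) = 0 := by
            exact_mod_cast congrArg (Complex.ofReal) h1
          rw [e2, e1]; ring
  -- g k differentiable at z₀ with fderiv D k
  have hgd : ∀ k, DifferentiableAt ℝ (g k) z₀ := fun k => gdiff' (hct k z₀ hz₀)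
  -- the key: ∑ g k z₀ * w k = 0
  have hkey : (∑ k : Fin 3, g k z₀ * w k) = 0 := by
    have hSd : HasFDerivAt (fun z => ∑ k : Fin 3, (g k z) ^ 2)
        (∑ k : Fin 3, (2 * g k z₀) • (fderiv ℝ (g k) z₀)) z₀ := by
      apply HasFDerivAt.fun_sum
      intro k _
      have := ((hgd k).hasFDerivAt.fun_mul (hgd k).hasFDerivAt)
      have h2 : (fun z => (g k z) ^ 2) = fun z => g k z * g k z := by funext z; ring
      rw [h2]
      exact this.congr_fderiv (by
        ext v
        simp only [ContinuousLinearMap.add_apply, ContinuousLinearMap.smul_apply, smul_eq_mul]; ring)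
    have hzero : fderiv ℝ (fun z => ∑ k : Fin 3, (g k z) ^ 2) z₀ = 0 := by
      have heq : (fun z => ∑ k : Fin 3, (g k z) ^ 2) =ᶠ[nhds z₀] (fun _ => 0) := by
        filter_upwards [hΩ.mem_nhds hz₀] with z hz using hS z hz
      rw [heq.fderiv_eq]; exact fderiv_const_apply 0
    have hL : (∑ k : Fin 3, (2 * g k z₀) • (fderiv ℝ (g k) z₀)) = 0 := by
      rw [← hSd.fderiv]; exact hzero
    have hL1 : (∑ k : Fin 3, (2 * g k z₀) * (fderiv ℝ (g k) z₀ 1)) = 0 := by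
      have := congrArg (fun L : ℂ →L[ℝ] ℂ => L 1) hL
      simpa using this
    have hLI : (∑ k : Fin 3, (2 * g k z₀) * (fderiv ℝ (g k) z₀ Complex.I)) = 0 := by
      have := congrArg (fun L : ℂ →L[ℝ] ℂ => L Complex.I) hL
      simpa using this
    have hw : ∀ k, w k = (1/2) * (fderiv ℝ (g k) z₀ 1 - Complex.I * fderiv ℝ (g k) z₀ Complex.I) := by
      intro k; rfl
    calc (∑ k : Fin 3, g k z₀ * w k)
        = (1/4) * ((∑ k : Fin 3, (2 * g k z₀) * (fderiv ℝ (g k) z₀ 1))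
            - Complex.I * (∑ k : Fin 3, (2 * g k z₀) * (fderiv ℝ (g k) z₀ Complex.I))) := by
          simp only [hw, Fin.sum_univ_three]; ring
      _ = 0 := by rw [hL1, hLI]; ring
  -- notation
  obtain ⟨hab, hxy, hspos⟩ := hconf z₀ hz₀
  set a : Fin 3 → ℝ := vX u z₀ with ha
  set b : Fin 3 → ℝ := vY u z₀ with hb
  set r : ℝ := Real.sqrt (∑ m : Fin 3, (a m)^2) with hrdef
  have hrne : r ≠ 0 := Real.sqrt_ne_zero'.mpr hspos
  have hr2 : r^2 = ∑ m : Fin 3, (a m)^2 := Real.sq_sqrt hspos.le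
  have hr2' : Real.sqrt (∑ m : Fin 3, (b m)^2) = r := by rw [hrdef, hxy]
  -- P = I * Q
  have hgk0 : ∀ k, g k z₀ = (1/2) * ((a k : ℂ) - Complex.I * (b k : ℂ)) :=
    fun k => gval' (hdiff k z₀ hz₀)
  have hPQ : (∑ k : Fin 3, w k * (a k : ℂ)) - Complex.I * (∑ k : Fin 3, w k * (b k : ℂ)) = 0 := by
    calc (∑ k : Fin 3, w k * (a k : ℂ)) - Complex.I * (∑ k : Fin 3, w k * (b k : ℂ))
        = 2 * ∑ k : Fin 3, g k z₀ * w k := by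
          simp only [hgk0, Fin.sum_univ_three]; ring
      _ = 0 := by rw [hkey]; ring
  have hP : (∑ k : Fin 3, w k * (a k : ℂ)) = Complex.I * (∑ k : Fin 3, w k * (b k : ℂ)) :=
    sub_eq_zero.mp hPQ
  -- unit vectors (complexified)
  have h1R : (∑ k : Fin 3, (e₁ k)^2) = 1 := by
    show (∑ k : Fin 3, (a k / r)^2) = 1
    have : (∑ k : Fin 3, (a k / r)^2) = (∑ k : Fin 3, (a k)^2) / r^2 := by
      simp [div_pow, Finset.sum_div]
    rw [this, hr2, div_self (ne_of_gt hspos)]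
  have h1 : (∑ k : Fin 3, ((e₁ k : ℝ) : ℂ)^2) = 1 := by exact_mod_cast h1R
  have h2R : (∑ k : Fin 3, (e₂ k)^2) = 1 := by
    show (∑ k : Fin 3, (b k / Real.sqrt (∑ m : Fin 3, (b m)^2))^2) = 1
    rw [hr2']
    have : (∑ k : Fin 3, (b k / r)^2) = (∑ k : Fin 3, (b k)^2) / r^2 := by
      simp [div_pow, Finset.sum_div]
    rw [this, hr2, ← hxy, div_self (ne_of_gt hspos)]
  have h2 : (∑ k : Fin 3, ((e₂ k : ℝ) : ℂ)^2) = 1 := by exact_mod_cast h2R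
  have h12R : (∑ k : Fin 3, e₁ k * e₂ k) = 0 := by
    show (∑ k : Fin 3, (a k / r) * (b k / Real.sqrt (∑ m : Fin 3, (b m)^2))) = 0
    rw [hr2']
    have : (∑ k : Fin 3, (a k / r) * (b k / r)) = (∑ k : Fin 3, a k * b k) / (r * r) := by
      rw [Finset.sum_div]; congr 1; funext k; ring
    rw [this, hab, zero_div]
  have h12 : (∑ k : Fin 3, ((e₁ k : ℝ) : ℂ) * ((e₂ k : ℝ) : ℂ)) = 0 := by exact_mod_cast h12R
  -- A = P / r, B = Q / r
  have hA : (∑ m : Fin 3, w m * ((e₁ m : ℝ) : ℂ)) = (∑ k : Fin 3, w k * (a k : ℂ)) / (r : ℂ) := by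
    rw [Finset.sum_div]; congr 1; funext m
    show w m * ((a m / r : ℝ) : ℂ) = _
    push_cast; ring
  have hB : (∑ m : Fin 3, w m * ((e₂ m : ℝ) : ℂ)) = (∑ k : Fin 3, w k * (b k : ℂ)) / (r : ℂ) := by
    rw [Finset.sum_div]; congr 1; funext m
    show w m * ((b m / Real.sqrt (∑ m : Fin 3, (b m)^2) : ℝ) : ℂ) = _
    rw [hr2']; push_cast; ring
  have hAB : (∑ m : Fin 3, w m * ((e₁ m : ℝ) : ℂ))^2 + (∑ m : Fin 3, w m * ((e₂ m : ℝ) : ℂ))^2 = 0 := by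
    rw [hA, hB, hP]
    linear_combination ((∑ k : Fin 3, w k * (b k : ℂ)) / (r : ℂ))^2 * Complex.I_sq
  exact perp_alg w (fun k => ((e₁ k : ℝ) : ℂ)) (fun k => ((e₂ k : ℝ) : ℂ)) h1 h2 h12 hAB

end
end

section
/- (Index of the flat Y-cone is at least two.) For constant triples f = (c₁, c₂, c₃) ∈ ℝ³ with c₁ + c₂ + c₃ = 0 (which satisfy the compatibility condition f₁ + f₂ + f₃ = 0 on γ), the index form satisfies Q(f) = −π(c₁² + c₂² + c₃²). In particular Q is negative definite on this two-dimensional subspace of compatible triples. -/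
noncomputable section

/-- **Index of the flat Y-cone is at least two.** For constant compatible
triples `(c₁, c₂, c₃)` with `c₁ + c₂ + c₃ = 0`, the index form equals
`-π (c₁² + c₂² + c₃²)`; in particular it is negative definite on this
two-dimensional subspace. -/
theorem index_form_on_constants (c : Fin 3 → ℝ) (hc : c 0 + c 1 + c 2 = 0) :
    Qform (fun j _ => c j) = -Real.pi * ((c 0) ^ 2 + (c 1) ^ 2 + (c 2) ^ 2) ∧
    (c ≠ 0 → Qform (fun j _ => c j) < 0) := by
  have hQ : Qform (fun j _ => c j) = -Real.pi * ((c 0) ^ 2 + (c 1) ^ 2 + (c 2) ^ 2) := by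
    have hterm : ∀ j : Fin 3,
        ((∫ z in Dhat, ((fderiv ℝ (fun _ : ℂ => c j) z 1) ^ 2 +
            (fderiv ℝ (fun _ : ℂ => c j) z Complex.I) ^ 2)) -
          ∫ θ in (-(Real.pi / 2))..(Real.pi / 2), (c j) ^ 2)
        = -(Real.pi * (c j) ^ 2) := by
      intro j
      have hd : fderiv ℝ (fun _ : ℂ => c j) = fun _ => 0 := by
        funext z; exact fderiv_const_apply (c j)
      rw [hd]
      simp [intervalIntegral.integral_const]
    simp only [Qform, Fin.sum_univ_three]
    rw [hterm 0, hterm 1, hterm 2]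
    ring
  refine ⟨hQ, fun hne => ?_⟩
  rw [hQ]
  have hex : ∃ i : Fin 3, c i ≠ 0 := by
    by_contra h
    push_neg at h
    exact hne (funext fun i => h i)
  obtain ⟨i, hi⟩ := hex
  have h0 : 0 ≤ (c 0) ^ 2 := sq_nonneg _
  have h1 : 0 ≤ (c 1) ^ 2 := sq_nonneg _
  have h2 : 0 ≤ (c 2) ^ 2 := sq_nonneg _
  have hpos : 0 < (c 0) ^ 2 + (c 1) ^ 2 + (c 2) ^ 2 := by
    fin_cases i
    · nlinarith [sq_pos_of_ne_zero (show c 0 ≠ 0 from hi)]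
    · nlinarith [sq_pos_of_ne_zero (show c 1 ≠ 0 from hi)]
    · nlinarith [sq_pos_of_ne_zero (show c 2 ≠ 0 from hi)]
  nlinarith [Real.pi_pos]

end
end
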